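/- arXiv:1411.4022 — 11 statements merged into one kernel-verified Lean document; each statement's English description precedes it below -/
import Mathlib

section
/- Let m, n ≥ 1. A polynomial f in the ring ℝ[ξ_{ij}, η_{ij} : 1 ≤ i ≤ m, 1 ≤ j ≤ n] belongs to R_n^m if and only if: for all i, j, k, the partial derivative ∂f/∂ξ_{ij} lies in the principal ideal generated by η_{ik}, and for all i, j, k with j ≠ k, the partial derivative ∂f/∂η_{ij} lies in the principal ideal generated by η_{ik}. -/
/-!
Restricting `f` to a coordinate line through a point `A` turns `∂f/∂w` into the derivative of a
univariate polynomial, so `f` is constant along the lines in direction `w` inside the hyperplane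
`η = 0` exactly when `∂f/∂w` vanishes on that hyperplane, i.e. lies in the ideal `(η)`.
A point of `W_i` with `η_{ik} = 0` can be moved inside the hyperplane `η_{ik} = 0`, one row-`i`
coordinate at a time, to the point whose row `i` is zero; this point depends only on the
coordinates outside row `i`.
-/

open MvPolynomial Polynomial

namespace MvPolynomial

variable {σ R : Type*} [CommRing R] [DecidableEq σ]

theorem eval_aeval_update_X_zero (v : σ) (P : σ → R) (f : MvPolynomial σ R) :
    eval P (aeval (Function.update X v 0) f) = eval (Function.update P v 0) f := by
  change aeval P (aeval _ f) = aeval _ f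
  rw [comp_aeval_apply]
  congr 1
  ext w
  rcases eq_or_ne w v with rfl | h <;> simp [Function.update_of_ne, *]

theorem mem_span_X_iff_eval_eq_zero [IsDomain R] [Infinite R] {v : σ} {f : MvPolynomial σ R} :
    f ∈ Ideal.span {X v} ↔ ∀ P : σ → R, P v = 0 → eval P f = 0 := by
  refine ⟨fun hf P hP => ?_, fun hf => ?_⟩
  · obtain ⟨q, rfl⟩ := Ideal.mem_span_singleton'.mp hf
    simp [hP]
  · have hmod : (Ideal.Quotient.mkₐ R (Ideal.span {X v})).comp
        (aeval (Function.update X v 0)) = Ideal.Quotient.mkₐ R (Ideal.span {X v}) := by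
      refine algHom_ext fun w => ?_
      rcases eq_or_ne w v with rfl | h
      · simp
      · simp [Function.update_of_ne h]
    have hzero : aeval (Function.update X v 0) f = 0 := MvPolynomial.funext fun P => by
      rw [eval_aeval_update_X_zero, hf _ (Function.update_self ..), map_zero]
    rw [← Ideal.Quotient.eq_zero_iff_mem, ← Ideal.Quotient.mkₐ_eq_mk R, ← hmod,
      AlgHom.comp_apply, hzero, map_zero]

noncomputable def lineRestriction (A : σ → R) (u : σ) : MvPolynomial σ R →ₐ[R] R[X] :=
  aeval (Function.update (fun w => Polynomial.C (A w)) u Polynomial.X)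

theorem eval_lineRestriction (A : σ → R) (u : σ) (t : R) (g : MvPolynomial σ R) :
    (lineRestriction A u g).eval t = eval (Function.update A u t) g := by
  change Polynomial.aeval t (aeval _ g) = aeval _ g
  rw [comp_aeval_apply]
  congr 1
  ext w
  rcases eq_or_ne w u with rfl | h <;> simp [Function.update_of_ne, *]

theorem derivative_lineRestriction (A : σ → R) (u : σ) (g : MvPolynomial σ R) :
    derivative (lineRestriction A u g) = lineRestriction A u (pderiv u g) := by
  induction g using MvPolynomial.induction_on with
  | C a => simp [lineRestriction]
  | add p q hp hq => simp only [map_add, hp, hq]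
  | mul_X p w hp =>
    rw [map_mul, derivative_mul, hp, pderiv_mul, map_add, map_mul, map_mul]
    rcases eq_or_ne w u with rfl | h
    · simp [lineRestriction, mul_comm]
    · simp [lineRestriction, pderiv_X_of_ne h, Function.update_of_ne h, mul_comm]

theorem eval_pderiv_eq_zero_of_forall_eval_update_eq [IsDomain R] [Infinite R]
    {A : σ → R} {u : σ} {g : MvPolynomial σ R}
    (h : ∀ t, eval (Function.update A u t) g = eval A g) : eval A (pderiv u g) = 0 := by
  have hconst : lineRestriction A u g = Polynomial.C (eval A g) :=
    Polynomial.funext fun t => by rw [eval_lineRestriction, h, Polynomial.eval_C]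
  have := congrArg (Polynomial.eval (A u)) (derivative_lineRestriction A u g)
  rwa [hconst, derivative_C, Polynomial.eval_zero, eval_lineRestriction, Function.update_eq_self,
    eq_comm] at this

theorem eval_update_eq_of_forall_eval_update_pderiv_eq_zero [IsDomain R] [CharZero R]
    {A : σ → R} {u : σ} {g : MvPolynomial σ R}
    (h : ∀ t, eval (Function.update A u t) (pderiv u g) = 0) (t : R) :
    eval (Function.update A u t) g = eval A g := by
  have hd : derivative (lineRestriction A u g) = 0 := by
    rw [derivative_lineRestriction]
    exact Polynomial.funext fun t => by rw [eval_lineRestriction, h, Polynomial.eval_zero]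
  have hc := eq_C_of_derivative_eq_zero hd
  calc eval (Function.update A u t) g = (lineRestriction A u g).eval t :=
        (eval_lineRestriction A u t g).symm
    _ = (lineRestriction A u g).eval (A u) := by rw [hc, Polynomial.eval_C, Polynomial.eval_C]
    _ = eval A g := by rw [eval_lineRestriction, Function.update_eq_self]

theorem eval_eq_of_pderiv_mem_span_X [IsDomain R] [CharZero R] {v : σ} {g : MvPolynomial σ R}
    (s : Finset σ) (hv : v ∉ s) (hg : ∀ u ∈ s, pderiv u g ∈ Ideal.span {X v})
    {P Q : σ → R} (hP : P v = 0) (hPQ : ∀ u ∉ s, P u = Q u) : eval P g = eval Q g := by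
  induction s using Finset.induction_on generalizing P with
  | empty => rw [_root_.funext fun u => hPQ u (Finset.notMem_empty u)]
  | insert a s ha ih =>
    have hav : v ≠ a := by rintro rfl; exact hv (Finset.mem_insert_self v s)
    have hline : ∀ t, eval (Function.update P a t) (pderiv a g) = 0 := fun t =>
      mem_span_X_iff_eval_eq_zero.mp (hg a (Finset.mem_insert_self a s)) _
        (by rw [Function.update_of_ne hav, hP])
    calc eval P g = eval (Function.update P a (Q a)) g :=
          (eval_update_eq_of_forall_eval_update_pderiv_eq_zero hline _).symm
      _ = eval Q g := by
        refine ih (fun h => hv (Finset.mem_insert_of_mem h))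
          (fun u hu => hg u (Finset.mem_insert_of_mem hu)) (by rw [Function.update_of_ne hav, hP])
          fun u hu => ?_
        rcases eq_or_ne u a with rfl | hua
        · exact Function.update_self ..
        · rw [Function.update_of_ne hua]
          exact hPQ u (by simp [hua, hu])

end MvPolynomial

section Rows

open Classical in
noncomputable def zeroRow {σ ι R : Type*} [Zero R] (row : σ → ι) (i : ι) (P : σ → R) :
    σ → R :=
  fun u => if row u = i then 0 else P u

theorem zeroRow_eq_zeroRow {σ ι R : Type*} [Zero R] (row : σ → ι) {i : ι} {P Q : σ → R}
    (hPQ : ∀ u, row u ≠ i → P u = Q u) : zeroRow row i P = zeroRow row i Q := by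
  ext u
  by_cases hu : row u = i <;> simp [zeroRow, hu, hPQ u]

variable {σ ι κ R : Type*} [CommRing R] [IsDomain R] [CharZero R]
  (row : σ → ι) (η : ι → κ → σ)

theorem eval_zeroRow_eq [Fintype σ] (hη : ∀ i k, row (η i k) = i) {f : MvPolynomial σ R}
    (hf : ∀ i k w, row w = i → w ≠ η i k → pderiv w f ∈ Ideal.span {X (η i k)})
    {i : ι} {k : κ} {P : σ → R} (hP : P (η i k) = 0) :
    eval (zeroRow row i P) f = eval P f := by
  classical
  refine eval_eq_of_pderiv_mem_span_X ((Finset.univ.filter (row · = i)).erase (η i k))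
    (Finset.notMem_erase _ _) (fun w hw => ?_) (by simp [zeroRow, hη]) fun u hu => ?_
  · obtain ⟨hne, hw⟩ := Finset.mem_erase.mp hw
    exact hf i k w (Finset.mem_filter.mp hw).2 hne
  · by_cases hui : row u = i
    · obtain rfl : u = η i k := by simpa [hui] using hu
      simp [zeroRow, hη, hP]
    · simp [zeroRow, hui]

theorem forall_eval_eq_iff_forall_pderiv_mem_span_X [Fintype σ] (hη : ∀ i k, row (η i k) = i)
    (f : MvPolynomial σ R) :
    (∀ i (P Q : σ → R), (∃ k, P (η i k) = 0) → (∃ k, Q (η i k) = 0) →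
        (∀ u, row u ≠ i → P u = Q u) → eval P f = eval Q f) ↔
      ∀ i k w, row w = i → w ≠ η i k → pderiv w f ∈ Ideal.span {X (η i k)} := by
  classical
  refine ⟨fun H i k w hw hwη => ?_, fun hf i P Q ⟨k, hP⟩ ⟨l, hQ⟩ hPQ => ?_⟩
  · refine mem_span_X_iff_eval_eq_zero.mpr fun P hP =>
      eval_pderiv_eq_zero_of_forall_eval_update_eq fun t =>
        H i _ _ ⟨k, ?_⟩ ⟨k, hP⟩ fun u hu => ?_
    · rwa [Function.update_of_ne hwη.symm]
    · exact Function.update_of_ne (by rintro rfl; exact hu hw) _ _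
  · rw [← eval_zeroRow_eq row η hη hf hP, ← eval_zeroRow_eq row η hη hf hQ,
      zeroRow_eq_zeroRow row hPQ]

end Rows

-- `Sum.inl (i, j)` is the variable `ξ_{ij}` and `Sum.inr (i, j)` is `η_{ij}`.
theorem stmt0_general (m n : ℕ)
    (f : MvPolynomial ((Fin m × Fin n) ⊕ (Fin m × Fin n)) ℝ) :
    (∀ i : Fin m, ∀ P Q : ((Fin m × Fin n) ⊕ (Fin m × Fin n)) → ℝ,
        (∏ k : Fin n, P (Sum.inr (i, k))) = 0 →
        (∏ k : Fin n, Q (Sum.inr (i, k))) = 0 →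
        (∀ i' : Fin m, ∀ j : Fin n, i' ≠ i →
          P (Sum.inl (i', j)) = Q (Sum.inl (i', j)) ∧
          P (Sum.inr (i', j)) = Q (Sum.inr (i', j))) →
        eval P f = eval Q f)
    ↔ ((∀ i : Fin m, ∀ j k : Fin n,
          pderiv (Sum.inl (i, j)) f ∈
            Ideal.span {(X (Sum.inr (i, k)) :
              MvPolynomial ((Fin m × Fin n) ⊕ (Fin m × Fin n)) ℝ)}) ∧
        (∀ i : Fin m, ∀ j k : Fin n, j ≠ k →
          pderiv (Sum.inr (i, j)) f ∈
            Ideal.span {(X (Sum.inr (i, k)) :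
              MvPolynomial ((Fin m × Fin n) ⊕ (Fin m × Fin n)) ℝ)})) := by
  have hW : ∀ (i : Fin m) (P : (Fin m × Fin n) ⊕ (Fin m × Fin n) → ℝ),
      (∏ k : Fin n, P (Sum.inr (i, k))) = 0 ↔ ∃ k, P (Sum.inr (i, k)) = 0 := by
    simp [Finset.prod_eq_zero_iff]
  have hagree : ∀ (i : Fin m) (P Q : (Fin m × Fin n) ⊕ (Fin m × Fin n) → ℝ),
      (∀ i' : Fin m, ∀ j : Fin n, i' ≠ i →
        P (Sum.inl (i', j)) = Q (Sum.inl (i', j)) ∧ P (Sum.inr (i', j)) = Q (Sum.inr (i', j))) ↔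
      ∀ u, Sum.elim Prod.fst Prod.fst u ≠ i → P u = Q u := by
    simp only [Sum.forall, Prod.forall, Sum.elim_inl, Sum.elim_inr]
    grind
  simp only [hW, hagree]
  rw [forall_eval_eq_iff_forall_pderiv_mem_span_X (Sum.elim Prod.fst Prod.fst)
    (fun i k => Sum.inr (i, k)) fun _ _ => rfl]
  simp only [Sum.forall, Prod.forall, Sum.elim_inl, Sum.elim_inr, ne_eq, reduceCtorEq,
    not_false_eq_true, Sum.inr.injEq, Prod.mk.injEq]
  grind

/-- A polynomial `f` in `ℝ[ξ_{ij}, η_{ij}]` belongs to `R_n^m` (i.e. for every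
`i`, `f` takes equal values at any two points of `W_i` agreeing in all coordinates outside
row `i`) iff `∂f/∂ξ_{ij} ∈ (η_{ik})` for all `i, j, k` and `∂f/∂η_{ij} ∈ (η_{ik})` for all
`i, j, k` with `j ≠ k`.  Here `Sum.inl (i, j)` is the variable `ξ_{ij}` and `Sum.inr (i, j)`
is the variable `η_{ij}`. -/
theorem stmt0 (m n : ℕ) (hm : 1 ≤ m) (hn : 1 ≤ n)
    (f : MvPolynomial ((Fin m × Fin n) ⊕ (Fin m × Fin n)) ℝ) :
    (∀ i : Fin m, ∀ P Q : ((Fin m × Fin n) ⊕ (Fin m × Fin n)) → ℝ,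
        (∏ k : Fin n, P (Sum.inr (i, k))) = 0 →
        (∏ k : Fin n, Q (Sum.inr (i, k))) = 0 →
        (∀ i' : Fin m, ∀ j : Fin n, i' ≠ i →
          P (Sum.inl (i', j)) = Q (Sum.inl (i', j)) ∧
          P (Sum.inr (i', j)) = Q (Sum.inr (i', j))) →
        eval P f = eval Q f)
    ↔ ((∀ i : Fin m, ∀ j k : Fin n,
          pderiv (Sum.inl (i, j)) f ∈
            Ideal.span {(X (Sum.inr (i, k)) :
              MvPolynomial ((Fin m × Fin n) ⊕ (Fin m × Fin n)) ℝ)}) ∧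
        (∀ i : Fin m, ∀ j k : Fin n, j ≠ k →
          pderiv (Sum.inr (i, j)) f ∈
            Ideal.span {(X (Sum.inr (i, k)) :
              MvPolynomial ((Fin m × Fin n) ⊕ (Fin m × Fin n)) ℝ)})) :=
  stmt0_general m n f
end

section
/- Let n ≥ 1. In the commutative ring of all real-valued functions on the set of finite multisets of pairs (x, y) ∈ ℝ^n × ℝ^n (with pointwise operations), the family of functions M ↦ p_{a,b}(M), indexed by pairs (a, b) with a ∈ ℕ₊^n and b ∈ ℕ^n, is algebraically independent over ℝ. -/
/-!
Restrict to multisets of the points `P(s)`, `s ∈ ℕ`, with `y_j - x_j = p_j ^ s` and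
`y_j + x_j = q_j ^ s` for distinct primes `p_j, q_j`. There `p_{a,b}` becomes the
exponential sum `M ↦ Σ_{s ∈ M} N ^ s` with `N = ∏ p_j ^ a_j q_j ^ b_j`, and distinct `(a, b)`
give distinct `N`. On the multiset with `c_s` copies of each `s < r`, finitely many such sums
are the coordinates of `c ↦ V c` for an invertible Vandermonde matrix `V`; since a polynomial
vanishing on `ℕ^r` is zero, they are algebraically independent.
-/

open MvPolynomial

/-- `p_{a,b}(M) = Σ_{(x,y) ∈ M} ∏_j (y_j - x_j)^{a_j} (y_j + x_j)^{b_j}` for a finite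
multiset `M` of pairs `(x, y) ∈ ℝ^n × ℝ^n`. -/
noncomputable def pInv (n : ℕ) (a b : Fin n → ℕ)
    (M : Multiset ((Fin n → ℝ) × (Fin n → ℝ))) : ℝ :=
  (M.map (fun xy => ∏ j, (xy.2 j - xy.1 j) ^ (a j) * (xy.2 j + xy.1 j) ^ (b j))).sum

theorem MvPolynomial.aeval_pi_apply {R σ X : Type*} [CommSemiring R] (f : σ → X → R)
    (p : MvPolynomial σ R) (x : X) : aeval f p x = eval (fun i => f i x) p :=
  AlgHom.congr_fun (comp_aeval (f := f) (Pi.evalAlgHom R (fun _ => R) x)) p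

theorem AlgebraicIndependent.of_precomp {R X Y ι : Type*} [CommRing R] {f : ι → X → R}
    (φ : Y → X) (h : AlgebraicIndependent R fun i => f i ∘ φ) : AlgebraicIndependent R f :=
  h.of_comp (AlgHom.pi fun y => Pi.evalAlgHom R (fun _ => R) (φ y))

theorem algebraicIndependent_mulVec_natCast {K ι κ : Type*} [Field K] [CharZero K] [Fintype κ]
    {V : Matrix ι κ K} (hV : Function.Surjective V.mulVec) :
    AlgebraicIndependent K fun i (c : κ → ℕ) => V.mulVec (Nat.cast ∘ c) i := by
  have := CharZero.infinite K
  rw [algebraicIndependent_iff]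
  intro P hP
  set L : ι → MvPolynomial κ K := fun i => ∑ k, C (V i k) * X k with hL
  set Q : MvPolynomial κ K := aeval L P
  have eval_Q (c : κ → K) : eval c Q = eval (V.mulVec c) P := by
    rw [← coe_aeval_eq_eval, ← coe_aeval_eq_eval]
    refine (AlgHom.congr_fun (comp_aeval (f := L) (aeval c)) P).trans ?_
    simp only [hL, map_sum, aeval_eq_eval, map_mul, eval_C, eval_X, coe_aeval_eq_eval]
    rfl
  have Q_eq_zero : Q = 0 := by
    refine funext_set (fun _ => Set.range Nat.cast)
      (fun _ => Set.infinite_range_of_injective Nat.cast_injective) fun x hx => ?_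
    choose c hc using fun k => hx k (Set.mem_univ k)
    obtain rfl : x = Nat.cast ∘ c := funext fun k => (hc k).symm
    rw [eval_Q, map_zero]
    simpa [aeval_pi_apply] using congrFun hP c
  refine MvPolynomial.funext fun y => ?_
  obtain ⟨c, rfl⟩ := hV y
  rw [← eval_Q, Q_eq_zero, map_zero, map_zero]

def expSum {R : Type*} [Semiring R] (q : R) (M : Multiset ℕ) : R := (M.map (q ^ ·)).sum

theorem expSum_sum_replicate {R κ : Type*} [Semiring R] [Fintype κ] (q : R) (c e : κ → ℕ) :
    expSum q (∑ k, Multiset.replicate (c k) (e k)) = ∑ k, c k * q ^ e k := by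
  change Multiset.sumAddMonoidHom (Multiset.mapAddMonoidHom (q ^ ·) _) = _
  simp only [map_sum, Multiset.mapAddMonoidHom_apply, Multiset.map_replicate,
    Multiset.coe_sumAddMonoidHom, Multiset.sum_replicate, nsmul_eq_mul]

theorem algebraicIndependent_expSum_fin {K : Type*} [Field K] [CharZero K] {r : ℕ}
    {v : Fin r → K} (hv : Function.Injective v) :
    AlgebraicIndependent K fun i => expSum (v i) := by
  refine .of_precomp (fun c : Fin r → ℕ => ∑ k, Multiset.replicate (c k) (k : ℕ)) ?_
  convert algebraicIndependent_mulVec_natCast (Matrix.mulVec_surjective_iff_isUnit.mpr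
    ((Matrix.isUnit_iff_isUnit_det _).mpr (Matrix.det_vandermonde_ne_zero_iff.mpr hv).isUnit))
    using 3 with i c
  simp [expSum_sum_replicate, Matrix.mulVec, dotProduct, mul_comm]

theorem algebraicIndependent_expSum {K ι : Type*} [Field K] [CharZero K] {q : ι → K}
    (hq : Function.Injective q) : AlgebraicIndependent K fun i => expSum (q i) := by
  refine algebraicIndependent_of_finite_type fun t ht => ?_
  have := ht.to_subtype
  rw [← algebraicIndependent_equiv (Finite.equivFin t).symm]
  exact algebraicIndependent_expSum_fin
    (hq.comp (Subtype.val_injective.comp (Finite.equivFin t).symm.injective))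

theorem Nat.prod_pow_injective_of_prime {κ : Type*} [Fintype κ] {p : κ → ℕ}
    (hp : ∀ k, (p k).Prime) (hinj : Function.Injective p) :
    Function.Injective fun e : κ → ℕ => ∏ k, p k ^ e k := by
  have factorization_prod_pow (e : κ → ℕ) (k : κ) :
      (∏ k, p k ^ e k).factorization (p k) = e k := by
    rw [Nat.factorization_prod fun k _ => (pow_pos (hp k).pos _).ne', Finset.sum_apply']
    simp only [Nat.factorization_pow, (hp _).factorization, Finsupp.smul_apply,
      Finsupp.single_apply, smul_eq_mul, mul_ite, mul_one, mul_zero]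
    rw [Finset.sum_eq_single k (fun x _ hx => if_neg (hinj.ne hx)) (by simp), if_pos rfl]
  intro e e' h
  funext k
  simpa [factorization_prod_pow] using congrArg (fun m => m.factorization (p k)) h

section PrimePowerPoints

variable (n : ℕ)

noncomputable def coordPrime (k : Fin n ⊕ Fin n) : ℕ := Nat.nth Nat.Prime (finSumFinEquiv k)

theorem coordPrime_injective : Function.Injective (coordPrime n) :=
  (Nat.nth_injective Nat.infinite_setOfPred_prime).comp
    (Fin.val_injective.comp finSumFinEquiv.injective)

noncomputable def primeCode (a b : Fin n → ℕ) : ℕ := ∏ k, coordPrime n k ^ Sum.elim a b k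

theorem primeCode_injective :
    Function.Injective fun ab : (Fin n → ℕ) × (Fin n → ℕ) => primeCode n ab.1 ab.2 :=
  (Nat.prod_pow_injective_of_prime (fun _ => Nat.prime_nth_prime _)
    (coordPrime_injective n)).comp (Equiv.sumArrowEquivProdArrow _ _ _).symm.injective

noncomputable def primePowerPoint (s : ℕ) : (Fin n → ℝ) × (Fin n → ℝ) :=
  (fun j => ((coordPrime n (.inr j) : ℝ) ^ s - (coordPrime n (.inl j) : ℝ) ^ s) / 2,
   fun j => ((coordPrime n (.inr j) : ℝ) ^ s + (coordPrime n (.inl j) : ℝ) ^ s) / 2)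

theorem pInv_map_primePowerPoint (a b : Fin n → ℕ) (M : Multiset ℕ) :
    pInv n a b (M.map (primePowerPoint n)) = expSum (primeCode n a b : ℝ) M := by
  unfold pInv expSum primeCode
  rw [Multiset.map_map]
  congr 1
  refine Multiset.map_congr rfl fun s _ => ?_
  simp only [Function.comp_apply, primePowerPoint, Nat.cast_prod, Fintype.prod_sum_type,
    Sum.elim_inl, Sum.elim_inr, ← Finset.prod_mul_distrib, ← Finset.prod_pow]
  refine Finset.prod_congr rfl fun j _ => ?_
  push_cast
  ring

end PrimePowerPoints

theorem stmt3_general (n : ℕ) :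
    AlgebraicIndependent ℝ
      (fun ab : {a : Fin n → ℕ // ∀ j, 1 ≤ a j} × (Fin n → ℕ) =>
        (fun M => pInv n ab.1.1 ab.2 M :
          Multiset ((Fin n → ℝ) × (Fin n → ℝ)) → ℝ)) := by
  refine .of_precomp (Multiset.map (primePowerPoint n)) ?_
  have code_injective : Function.Injective
      fun ab : {a : Fin n → ℕ // ∀ j, 1 ≤ a j} × (Fin n → ℕ) => (primeCode n ab.1 ab.2 : ℝ) :=
    Nat.cast_injective.comp <|
      (primeCode_injective n).comp (Subtype.val_injective.prodMap Function.injective_id)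
  have family_eq : (fun ab : {a : Fin n → ℕ // ∀ j, 1 ≤ a j} × (Fin n → ℕ) =>
      (fun M => pInv n ab.1.1 ab.2 M) ∘ Multiset.map (primePowerPoint n)) =
      fun ab => expSum (primeCode n ab.1 ab.2 : ℝ) :=
    funext fun ab => funext fun M => pInv_map_primePowerPoint n _ _ M
  rw [family_eq]
  exact algebraicIndependent_expSum code_injective

/-- In the ring of all real-valued functions on the set of finite multisets of
pairs `(x, y) ∈ ℝ^n × ℝ^n` (pointwise operations), the family `M ↦ p_{a,b}(M)`, indexed by
pairs `(a, b)` with `a ∈ ℕ₊^n` and `b ∈ ℕ^n`, is algebraically independent over ℝ. -/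
theorem stmt3 (n : ℕ) (hn : 1 ≤ n) :
    AlgebraicIndependent ℝ
      (fun ab : {a : Fin n → ℕ // ∀ j, 1 ≤ a j} × (Fin n → ℕ) =>
        (fun M => pInv n ab.1.1 ab.2 M :
          Multiset ((Fin n → ℝ) × (Fin n → ℝ)) → ℝ)) :=
  stmt3_general n
end

section
/- Let x ≤ y be real numbers, a ≥ 2 and b natural numbers, and let T_{x,y} = {(z, z') ∈ ℝ² : x ≤ z ≤ z' ≤ y}. Then ∫_{T_{x,y}} (z' − z)^{a−2} (z' + z)^b d(z, z') = Σ_{i=0}^{b+1} ((1 − (−1)^i)/2) · ((a−2)!·b! / ((a−1+i)!·(b+1−i)!)) · (y − x)^{a−1+i} (y + x)^{b+1−i}. -/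
/-!
Shear the triangle by `u = z' - z`: it becomes `{0 ≤ u ≤ y - x, x ≤ z ≤ y - u}` and the integrand
becomes `u ^ (a - 2) * (2 z + u) ^ b`. The inner `z`-integral is
`((L - u + s) ^ (b + 1) - (-(L - u) + s) ^ (b + 1)) / (2 (b + 1))` with `L = y - x`, `s = y + x`,
whose binomial expansion keeps only the odd powers of `L - u`; each of them leaves a Beta integral
`∫₀^L u ^ m (L - u) ^ n = m! n! / (m + n + 1)! L ^ (m + n + 1)`.
-/

open MeasureTheory Set
open scoped Nat

theorem integral_pow_mul_sub_pow (U : ℝ) (m n : ℕ) :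
    ∫ u in (0 : ℝ)..U, u ^ m * (U - u) ^ n =
      (m ! * n ! / (m + n + 1)! : ℝ) * U ^ (m + n + 1) := by
  induction n generalizing m with
  | zero =>
    simp only [pow_zero, mul_one, integral_pow, Nat.factorial_succ]
    push_cast
    field_simp
    simp
  | succ n ih =>
    have hsplit : ∀ u : ℝ, u ^ m * (U - u) ^ (n + 1) =
        U * (u ^ m * (U - u) ^ n) - u ^ (m + 1) * (U - u) ^ n := fun u => by ring
    simp_rw [hsplit]
    rw [intervalIntegral.integral_sub (by apply Continuous.intervalIntegrable; fun_prop)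
      (by apply Continuous.intervalIntegrable; fun_prop),
      intervalIntegral.integral_const_mul, ih, ih,
      show m + 1 + n + 1 = m + n + 1 + 1 by omega, show m + (n + 1) + 1 = m + n + 1 + 1 by omega,
      Nat.factorial_succ (m + n + 1), Nat.factorial_succ m, Nat.factorial_succ n]
    push_cast
    field_simp
    ring

theorem add_pow_sub_neg_add_pow {R : Type*} [CommRing R] (t s : R) (n : ℕ) :
    (t + s) ^ n - (-t + s) ^ n =
      ∑ i ∈ Finset.range (n + 1), (1 - (-1) ^ i) * n.choose i * t ^ i * s ^ (n - i) := by
  rw [add_pow, add_pow, ← Finset.sum_sub_distrib]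
  refine Finset.sum_congr rfl fun i _ => ?_
  rw [neg_pow]
  ring

theorem integral_two_mul_add_pow (x y u : ℝ) (b : ℕ) :
    ∫ z in x..(y - u), (2 * z + u) ^ b =
      ∑ i ∈ Finset.range (b + 2), (1 - (-1) ^ i) / 2 * ((b + 1).choose i / (b + 1) : ℝ) *
        (y - x - u) ^ i * (y + x) ^ (b + 1 - i) := by
  rw [intervalIntegral.integral_comp_mul_add (fun z => z ^ b) two_ne_zero, integral_pow,
    show 2 * (y - u) + u = (y - x - u) + (y + x) by ring,
    show 2 * x + u = -(y - x - u) + (y + x) by ring, add_pow_sub_neg_add_pow, smul_eq_mul,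
    Finset.sum_div, Finset.mul_sum]
  refine Finset.sum_congr rfl fun i _ => ?_
  field_simp

theorem cast_choose_div_mul_factorial_div (b c i : ℕ) (hi : i ≤ b + 1) :
    ((b + 1).choose i / (b + 1) : ℝ) * (c ! * i ! / (c + i + 1)!) =
      c ! * b ! / ((c + 1 + i)! * (b + 1 - i)!) := by
  rw [Nat.cast_choose ℝ hi, Nat.factorial_succ b, show c + 1 + i = c + i + 1 by omega]
  push_cast
  field_simp

theorem setIntegral_fiberwise_Icc {α E : Type*} [MeasurableSpace α] {μ : Measure α} [SFinite μ]
    [NormedAddCommGroup E] [NormedSpace ℝ E] {s : Set α} (hs : MeasurableSet s) {lo hi : α → ℝ}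
    (hlo : Measurable lo) (hhi : Measurable hi) {g : α × ℝ → E}
    (hg : IntegrableOn g {p | p.1 ∈ s ∧ p.2 ∈ Icc (lo p.1) (hi p.1)} (μ.prod volume)) :
    ∫ p in {p | p.1 ∈ s ∧ p.2 ∈ Icc (lo p.1) (hi p.1)}, g p ∂μ.prod volume =
      ∫ u in s, (∫ z in Icc (lo u) (hi u), g (u, z)) ∂μ := by
  have hR : MeasurableSet {p : α × ℝ | p.1 ∈ s ∧ p.2 ∈ Icc (lo p.1) (hi p.1)} :=
    (measurable_fst hs).inter ((measurableSet_le (hlo.comp measurable_fst) measurable_snd).inter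
      (measurableSet_le measurable_snd (hhi.comp measurable_fst)))
  rw [← integral_indicator hR, integral_prod _ ((integrable_indicator_iff hR).2 hg),
    ← integral_indicator hs]
  congr 1 with u
  by_cases hu : u ∈ s
  · rw [indicator_of_mem hu, ← integral_indicator measurableSet_Icc]
    congr 1 with z
    simp only [indicator, mem_ofPred_eq, hu, true_and]
  · simp only [indicator, mem_ofPred_eq, hu, false_and, if_false, integral_zero]

theorem setIntegral_triangle_eq {E : Type*} [NormedAddCommGroup E] [NormedSpace ℝ E]
    {f : ℝ × ℝ → E} (hf : Continuous f) {x y : ℝ} (hxy : x ≤ y) :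
    ∫ p in {p : ℝ × ℝ | x ≤ p.1 ∧ p.1 ≤ p.2 ∧ p.2 ≤ y}, f p =
      ∫ u in (0 : ℝ)..(y - x), ∫ z in x..(y - u), f (z, z + u) := by
  let shear : ℝ × ℝ → ℝ × ℝ := fun q => (q.2, q.2 + q.1)
  have hshear : MeasurePreserving shear := by
    simpa only [← Measure.volume_eq_prod] using measurePreserving_prod_add_swap volume volume
  have hemb : MeasurableEmbedding shear :=
    (MeasurableEquiv.prodComm.trans (MeasurableEquiv.shearAddRight ℝ)).measurableEmbedding
  have hpre : shear ⁻¹' {p : ℝ × ℝ | x ≤ p.1 ∧ p.1 ≤ p.2 ∧ p.2 ≤ y} =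
      {q | q.1 ∈ Icc 0 (y - x) ∧ q.2 ∈ Icc x (y - q.1)} := by
    ext ⟨u, z⟩
    simp only [shear, mem_preimage, mem_ofPred_eq, mem_Icc]
    constructor
    · rintro ⟨h₁, h₂, h₃⟩
      exact ⟨⟨by linarith, by linarith⟩, h₁, by linarith⟩
    · rintro ⟨⟨h₁, h₂⟩, h₃, h₄⟩
      exact ⟨h₃, by linarith, by linarith⟩
  have hint : IntegrableOn (fun q => f (shear q))
      {q | q.1 ∈ Icc 0 (y - x) ∧ q.2 ∈ Icc x (y - q.1)} :=
    ((show Continuous fun q => f (shear q) by fun_prop).continuousOn.integrableOn_compact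
      (isCompact_Icc.prod isCompact_Icc)).mono_set
        fun q hq => ⟨hq.1, hq.2.1, by linarith [hq.1.1, hq.2.2]⟩
  rw [← hshear.setIntegral_preimage_emb hemb, hpre, Measure.volume_eq_prod,
    setIntegral_fiberwise_Icc measurableSet_Icc measurable_const (hi := fun u => y - u)
      (by fun_prop) hint,
    integral_Icc_eq_integral_Ioc, ← intervalIntegral.integral_of_le (by linarith)]
  refine intervalIntegral.integral_congr fun u hu => ?_
  rw [uIcc_of_le (by linarith)] at hu
  rw [integral_Icc_eq_integral_Ioc, ← intervalIntegral.integral_of_le (by linarith [hu.2])]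

/-- For `x ≤ y`, `a ≥ 2`, `b : ℕ`, and
`T_{x,y} = {(z, z') : x ≤ z ≤ z' ≤ y}`,
`∫_{T_{x,y}} (z'-z)^{a-2} (z'+z)^b d(z,z') =
  Σ_{i=0}^{b+1} ((1-(-1)^i)/2) ((a-2)!·b!/((a-1+i)!·(b+1-i)!)) (y-x)^{a-1+i} (y+x)^{b+1-i}`. -/
theorem stmt5 (x y : ℝ) (hxy : x ≤ y) (a b : ℕ) (ha : 2 ≤ a) :
    ∫ p in {p : ℝ × ℝ | x ≤ p.1 ∧ p.1 ≤ p.2 ∧ p.2 ≤ y},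
        (p.2 - p.1) ^ (a - 2) * (p.2 + p.1) ^ b =
      ∑ i ∈ Finset.range (b + 2),
        ((1 - (-1 : ℝ) ^ i) / 2) *
          ((Nat.factorial (a - 2) * Nat.factorial b : ℝ) /
            ((Nat.factorial (a - 1 + i) : ℝ) * (Nat.factorial (b + 1 - i) : ℝ))) *
          (y - x) ^ (a - 1 + i) * (y + x) ^ (b + 1 - i) := by
  obtain ⟨c, rfl⟩ : ∃ c, a = c + 2 := ⟨a - 2, by omega⟩
  simp only [show c + 2 - 2 = c by omega, show ∀ i, c + 2 - 1 + i = c + 1 + i by omega]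
  have hinner : ∀ u, ∫ z in x..(y - u), (z + u - z) ^ c * (z + u + z) ^ b =
      ∑ i ∈ Finset.range (b + 2), (1 - (-1) ^ i) / 2 * ((b + 1).choose i / (b + 1) : ℝ) *
        (y + x) ^ (b + 1 - i) * (u ^ c * (y - x - u) ^ i) := fun u => by
    calc _ = u ^ c * ∫ z in x..(y - u), (2 * z + u) ^ b := by
          rw [← intervalIntegral.integral_const_mul]
          exact intervalIntegral.integral_congr fun z _ => by ring
      _ = _ := by
          rw [integral_two_mul_add_pow, Finset.mul_sum]
          exact Finset.sum_congr rfl fun i _ => by ring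
  rw [setIntegral_triangle_eq (by fun_prop) hxy]
  simp only [hinner]
  rw [intervalIntegral.integral_finsetSum fun i _ => by
    apply Continuous.intervalIntegrable; fun_prop]
  refine Finset.sum_congr rfl fun i hi => ?_
  rw [intervalIntegral.integral_const_mul, integral_pow_mul_sub_pow,
    ← cast_choose_div_mul_factorial_div b c i (by simp at hi; omega),
    show c + 1 + i = c + i + 1 by omega]
  ring
end

section
/- Let n ≥ 1, let x, y ∈ ℝ^n with x_i ≤ y_i for all i, and let (a, b) ∈ ℕ₊^n × ℕ^n. Set I = {i : a_i = 1} and J = {i : a_i ≥ 2}. Then the Lebesgue integral over (z, w) ∈ ℝ^n × ℝ^J of ∏_{i∈I} z_i^{b_i} · ∏_{i∈J} (w_i − z_i)^{a_i−2} (w_i + z_i)^{b_i} times the indicator of the region {x_i ≤ z_i ≤ y_i for i ∈ I, and x_i ≤ z_i ≤ w_i ≤ y_i for i ∈ J} equals the product ∏_{i∈I} [ (1/((b_i+1)·2^{b_i+1})) Σ_{k=0}^{b_i+1} (1 − (−1)^k) C(b_i+1, k) (y_i − x_i)^k (y_i + x_i)^{b_i+1−k} ] · ∏_{i∈J} [ Σ_{k=0}^{b_i+1}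 ((1 − (−1)^k)/2) ((a_i−2)!·b_i! / ((a_i−1+k)!·(b_i+1−k)!)) (y_i − x_i)^{a_i−1+k} (y_i + x_i)^{b_i+1−k} ]. -/
/-!
Both the region and the integrand factor over the coordinates once `(z, w)` is regrouped as
`((z_i)_{i ∈ I}, (z_i, w_i)_{i ∈ J})`, so the integral is a product of integrals of `z^b` over
`[x, y]` and of `(w - z)^p (w + z)^b` over the triangle `x ≤ z ≤ w ≤ y` (with `p = a - 2`).

With `s = y + x` and `d = y - x` we have `2y = s + d` and `2x = s - d`, so
`∫_x^y z^b = ((s + d)^{b+1} - (s - d)^{b+1}) / ((b + 1) 2^{b+1})`, and in the binomial expansion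
only odd powers of `d` survive.

On the triangle we integrate first in `z`, then in `w`. Both antiderivatives are explicit
polynomials in `w ∓ z` (resp. `w ∓ x`), and their derivatives telescope thanks to the single
recurrence `c_{k+1} (p + k + 2) = c_k (b + 1 - k)` for `c_k = p! b! / ((p + 1 + k)! (b + 1 - k)!)`.
-/

open MeasureTheory Set Finset
open scoped Nat

theorem add_pow_sub_sub_pow {R : Type*} [CommRing R] (s d : R) (N : ℕ) :
    (s + d) ^ N - (s - d) ^ N =
      ∑ k ∈ range (N + 1), (1 - (-1) ^ k) * N.choose k * d ^ k * s ^ (N - k) := by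
  rw [add_comm s, sub_eq_add_neg s, add_comm s, add_pow, add_pow, ← sum_sub_distrib]
  refine sum_congr rfl fun k _ => ?_
  rw [neg_pow]
  ring

theorem setIntegral_Icc_pow (b : ℕ) {x y : ℝ} (hxy : x ≤ y) :
    ∫ z in Icc x y, z ^ b = 1 / ((b + 1) * 2 ^ (b + 1)) * ∑ k ∈ range (b + 2),
      (1 - (-1) ^ k) * (b + 1).choose k * (y - x) ^ k * (y + x) ^ (b + 1 - k) := by
  rw [← add_pow_sub_sub_pow, integral_Icc_eq_integral_Ioc, ← intervalIntegral.integral_of_le hxy,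
    integral_pow]
  field_simp
  ring

noncomputable def triangleCoeff (p b k : ℕ) : ℝ :=
  (p ! * b ! : ℝ) / ((p + 1 + k)! * (b + 1 - k)!)

theorem triangleCoeff_succ_mul {p b k : ℕ} (hk : k ≤ b) :
    triangleCoeff p b (k + 1) * (p + 1 + (k + 1) : ℕ) =
      triangleCoeff p b k * (b + 1 - k : ℕ) := by
  obtain ⟨m, rfl⟩ := Nat.exists_eq_add_of_le hk
  simp only [triangleCoeff, show p + 1 + (k + 1) = (p + 1 + k) + 1 by omega,
    show k + m + 1 - (k + 1) = m by omega, show k + m + 1 - k = m + 1 by omega,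
    Nat.factorial_succ]
  push_cast
  field_simp

theorem triangleCoeff_zero_mul (p b : ℕ) :
    triangleCoeff p b 0 * (b + 1 : ℕ) * (p + 1 : ℕ) = 1 := by
  simp only [triangleCoeff, add_zero, Nat.factorial_succ]
  push_cast [Nat.factorial_succ]
  field_simp

noncomputable def oddPart (k : ℕ) : ℝ := (1 - (-1) ^ k) / 2

theorem oddPart_zero : oddPart 0 = 0 := by simp [oddPart]

theorem oddPart_succ_add_oddPart (k : ℕ) : oddPart (k + 1) + oddPart k = 1 := by
  simp only [oddPart, pow_succ]
  ring

theorem hasDerivAt_triangle_inner (p b : ℕ) (w z : ℝ) :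
    HasDerivAt (fun z => -∑ j ∈ range (b + 1),
        triangleCoeff p b j * (b + 1 - j : ℕ) * ((w - z) ^ (p + 1 + j) * (w + z) ^ (b - j)))
      ((w - z) ^ p * (w + z) ^ b) z := by
  set T : ℕ → ℝ := fun j => triangleCoeff p b j * (b + 1 - j : ℕ) * (p + 1 + j : ℕ) *
    ((w - z) ^ (p + j) * (w + z) ^ (b - j))
  have hterm : ∀ j ∈ range (b + 1), HasDerivAt (fun z => triangleCoeff p b j * (b + 1 - j : ℕ) *
      ((w - z) ^ (p + 1 + j) * (w + z) ^ (b - j))) (T (j + 1) - T j) z := by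
    intro j hj
    have hjb : j ≤ b := Nat.lt_succ_iff.mp (mem_range.mp hj)
    refine (((((hasDerivAt_id z).const_sub w).pow (p + 1 + j)).mul
      (((hasDerivAt_id z).const_add w).pow (b - j))).const_mul
      (triangleCoeff p b j * (b + 1 - j : ℕ))).congr_deriv ?_
    simp only [T, id, Pi.pow_apply, show p + 1 + j - 1 = p + j by omega,
      show b - (j + 1) = b - j - 1 by omega, show b + 1 - (j + 1) = b - j by omega,
      show p + (j + 1) = p + 1 + j by omega]
    linear_combination (-(b - j : ℕ) * ((w - z) ^ (p + 1 + j) * (w + z) ^ (b - j - 1)) : ℝ) *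
      triangleCoeff_succ_mul (p := p) hjb
  refine (HasDerivAt.fun_sum hterm).neg.congr_deriv ?_
  have hT₀ : T 0 = (w - z) ^ p * (w + z) ^ b := by
    simp only [T, Nat.sub_zero, add_zero, triangleCoeff_zero_mul, one_mul]
  rw [sum_range_sub T, hT₀]
  simp [T]

theorem integral_triangle_inner (p b : ℕ) (x w : ℝ) :
    ∫ z in x..w, (w - z) ^ p * (w + z) ^ b = ∑ j ∈ range (b + 1),
      triangleCoeff p b j * (b + 1 - j : ℕ) * ((w - x) ^ (p + 1 + j) * (w + x) ^ (b - j)) := by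
  rw [intervalIntegral.integral_eq_sub_of_hasDerivAt
    (fun z _ => hasDerivAt_triangle_inner p b w z)
    ((by fun_prop : Continuous _).intervalIntegrable _ _)]
  simp

theorem hasDerivAt_triangle_outer (p b : ℕ) (x w : ℝ) :
    HasDerivAt (fun w => ∑ k ∈ range (b + 2),
        oddPart k * triangleCoeff p b k * ((w - x) ^ (p + 1 + k) * (w + x) ^ (b + 1 - k)))
      (∑ j ∈ range (b + 1),
        triangleCoeff p b j * (b + 1 - j : ℕ) * ((w - x) ^ (p + 1 + j) * (w + x) ^ (b - j))) w := by
  have hterm : ∀ k ∈ range (b + 2), HasDerivAt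
      (fun w => oddPart k * triangleCoeff p b k * ((w - x) ^ (p + 1 + k) * (w + x) ^ (b + 1 - k)))
      (oddPart k * triangleCoeff p b k * (p + 1 + k : ℕ) *
          ((w - x) ^ (p + k) * (w + x) ^ (b + 1 - k)) +
        oddPart k * triangleCoeff p b k * (b + 1 - k : ℕ) *
          ((w - x) ^ (p + 1 + k) * (w + x) ^ (b - k))) w := by
    intro k _
    refine (((((hasDerivAt_id w).sub_const x).pow (p + 1 + k)).mul
      (((hasDerivAt_id w).add_const x).pow (b + 1 - k))).const_mul _).congr_deriv ?_
    simp only [id, Pi.pow_apply, show p + 1 + k - 1 = p + k by omega,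
      show b + 1 - k - 1 = b - k by omega]
    ring
  refine (HasDerivAt.fun_sum hterm).congr_deriv ?_
  rw [sum_add_distrib, sum_range_succ', sum_range_succ _ (b + 1)]
  simp only [oddPart_zero, Nat.sub_self, Nat.cast_zero, zero_mul, mul_zero, add_zero,
    ← sum_add_distrib]
  refine sum_congr rfl fun j hj => ?_
  have hjb : j ≤ b := Nat.lt_succ_iff.mp (mem_range.mp hj)
  rw [show p + (j + 1) = p + 1 + j by omega, show b + 1 - (j + 1) = b - j by omega]
  linear_combination (oddPart (j + 1) * ((w - x) ^ (p + 1 + j) * (w + x) ^ (b - j))) *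
      triangleCoeff_succ_mul (p := p) hjb +
    (triangleCoeff p b j * (b + 1 - j : ℕ) * ((w - x) ^ (p + 1 + j) * (w + x) ^ (b - j))) *
      oddPart_succ_add_oddPart j

theorem setIntegral_triangle_eq_intervalIntegral {E : Type*} [NormedAddCommGroup E]
    [NormedSpace ℝ E] [CompleteSpace E] {f : ℝ × ℝ → E} (hf : Continuous f) {x y : ℝ}
    (hxy : x ≤ y) :
    ∫ q in {q : ℝ × ℝ | x ≤ q.1 ∧ q.1 ≤ q.2 ∧ q.2 ≤ y}, f q =
      ∫ w in x..y, ∫ z in x..w, f (z, w) := by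
  set S := {q : ℝ × ℝ | x ≤ q.1 ∧ q.1 ≤ q.2 ∧ q.2 ≤ y}
  have hS : IsClosed S := (isClosed_le continuous_const continuous_fst).inter
    ((isClosed_le continuous_fst continuous_snd).inter
      (isClosed_le continuous_snd continuous_const))
  have hint : Integrable (S.indicator f) (volume.prod volume) := by
    refine IntegrableOn.integrable_indicator ?_ hS.measurableSet
    exact (hf.continuousOn.integrableOn_compact (isCompact_Icc.prod isCompact_Icc)).mono_set
      fun q ⟨h₁, h₂, h₃⟩ => ⟨⟨h₁, h₂.trans h₃⟩, ⟨h₁.trans h₂, h₃⟩⟩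
  have hslice : ∀ w, ∫ z, S.indicator f (z, w) =
      (Icc x y).indicator (fun w => ∫ z in x..w, f (z, w)) w := by
    intro w
    by_cases hw : w ∈ Icc x y
    · rw [indicator_of_mem hw, intervalIntegral.integral_of_le hw.1,
        ← integral_Icc_eq_integral_Ioc, ← integral_indicator measurableSet_Icc]
      congr 1 with z
      simp only [Set.indicator_apply, S, Set.mem_Icc, Set.mem_ofPred]
      grind
    · rw [indicator_of_notMem hw, ← integral_zero ℝ E]
      congr 1 with z
      exact indicator_of_notMem (fun h => hw ⟨h.1.trans h.2.1, h.2.2⟩) _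
  rw [← integral_indicator hS.measurableSet, Measure.volume_eq_prod, integral_prod_symm _ hint]
  simp only [hslice]
  rw [integral_indicator measurableSet_Icc, integral_Icc_eq_integral_Ioc,
    ← intervalIntegral.integral_of_le hxy]

theorem setIntegral_triangle (p b : ℕ) {x y : ℝ} (hxy : x ≤ y) :
    ∫ q in {q : ℝ × ℝ | x ≤ q.1 ∧ q.1 ≤ q.2 ∧ q.2 ≤ y}, (q.2 - q.1) ^ p * (q.2 + q.1) ^ b =
      ∑ k ∈ range (b + 2),
        oddPart k * triangleCoeff p b k * ((y - x) ^ (p + 1 + k) * (y + x) ^ (b + 1 - k)) := by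
  rw [setIntegral_triangle_eq_intervalIntegral (by fun_prop) hxy]
  simp only [integral_triangle_inner]
  rw [intervalIntegral.integral_eq_sub_of_hasDerivAt
    (fun w _ => hasDerivAt_triangle_outer p b x w)
    ((by fun_prop : Continuous _).intervalIntegrable _ _)]
  simp

section Split

variable {ι α 𝕜 : Type*} [Fintype ι] [MeasureSpace α] [SigmaFinite (volume : Measure α)]
  [RCLike 𝕜]

theorem setIntegral_univ_pi_eq_prod (s : ι → Set α) (f : ι → α → 𝕜) :
    ∫ x in Set.univ.pi s, ∏ i, f i (x i) = ∏ i, ∫ y in s i, f i y := by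
  rw [volume_pi, Measure.restrict_pi_pi]
  exact integral_fintype_prod_eq_prod f

def splitPairsEquiv (P : ι → Prop) [DecidablePred P] :
    (ι → α) × ({i // P i} → α) ≃ᵐ ({i // ¬P i} → α) × ({i // P i} → α × α) :=
  ((MeasurableEquiv.piEquivPiSubtypeProd (fun _ => α) P).prodCongr (.refl _)).trans <|
    (MeasurableEquiv.prodComm.prodCongr (.refl _)).trans <|
      MeasurableEquiv.prodAssoc.trans <|
        (MeasurableEquiv.refl _).prodCongr (MeasurableEquiv.arrowProdEquivProdArrow α α _).symm

theorem measurePreserving_splitPairsEquiv (P : ι → Prop) [DecidablePred P] :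
    MeasurePreserving (splitPairsEquiv (α := α) P) :=
  ((MeasurePreserving.id volume).prod
    ((volume_measurePreserving_arrowProdEquivProdArrow α α _).symm _)).comp <|
      (measurePreserving_prodAssoc volume volume volume).comp <|
        (Measure.measurePreserving_swap.prod (.id volume)).comp <|
          (volume_preserving_piEquivPiSubtypeProd (fun _ => α) P).prod (.id volume)

theorem setIntegral_splitPairs_eq_prod (P : ι → Prop) [DecidablePred P]
    (s : {i // ¬P i} → Set α) (t : {i // P i} → Set (α × α))
    (f : {i // ¬P i} → α → 𝕜) (g : {i // P i} → α × α → 𝕜) :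
    ∫ zw in {zw : (ι → α) × ({i // P i} → α) |
        (∀ i : {i // ¬P i}, zw.1 i ∈ s i) ∧ ∀ i : {i // P i}, (zw.1 i, zw.2 i) ∈ t i},
      (∏ i : {i // ¬P i}, f i (zw.1 i)) * ∏ i : {i // P i}, g i (zw.1 i, zw.2 i) =
    (∏ i, ∫ z in s i, f i z) * ∏ i, ∫ q in t i, g i q := by
  have hregion : {zw : (ι → α) × ({i // P i} → α) |
      (∀ i : {i // ¬P i}, zw.1 i ∈ s i) ∧ ∀ i : {i // P i}, (zw.1 i, zw.2 i) ∈ t i} =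
      splitPairsEquiv P ⁻¹' (Set.univ.pi s ×ˢ Set.univ.pi t) := by
    ext zw
    simp only [Set.mem_preimage, Set.mem_prod, Set.mem_univ_pi]
    rfl
  rw [hregion]
  refine ((measurePreserving_splitPairsEquiv P).setIntegral_preimage_emb
    (splitPairsEquiv P).measurableEmbedding
    (fun uv => (∏ i, f i (uv.1 i)) * ∏ i, g i (uv.2 i)) _).trans ?_
  rw [Measure.volume_eq_prod]
  refine (setIntegral_prod_mul (fun u : {i // ¬P i} → α => ∏ i, f i (u i))
    (fun v : {i // P i} → α × α => ∏ i, g i (v i)) _ _).trans ?_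
  rw [setIntegral_univ_pi_eq_prod, setIntegral_univ_pi_eq_prod]

end Split

theorem stmt6_general (n : ℕ) (x y : Fin n → ℝ) (hxy : ∀ i, x i ≤ y i)
    (a b : Fin n → ℕ) (ha : ∀ i, 1 ≤ a i) :
    (∫ zw : (Fin n → ℝ) × ({i : Fin n // 2 ≤ a i} → ℝ) in
        {zw : (Fin n → ℝ) × ({i : Fin n // 2 ≤ a i} → ℝ) |
          (∀ i, a i = 1 → x i ≤ zw.1 i ∧ zw.1 i ≤ y i) ∧
          (∀ i : {i : Fin n // 2 ≤ a i},
            x i.1 ≤ zw.1 i.1 ∧ zw.1 i.1 ≤ zw.2 i ∧ zw.2 i ≤ y i.1)},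
        (∏ i ∈ Finset.univ.filter (fun i => a i = 1), zw.1 i ^ b i) *
          ∏ i : {i : Fin n // 2 ≤ a i},
            (zw.2 i - zw.1 i.1) ^ (a i.1 - 2) * (zw.2 i + zw.1 i.1) ^ b i.1) =
      (∏ i ∈ Finset.univ.filter (fun i => a i = 1),
        (1 / (((b i : ℝ) + 1) * 2 ^ (b i + 1)) *
          ∑ k ∈ Finset.range (b i + 2),
            (1 - (-1 : ℝ) ^ k) * (Nat.choose (b i + 1) k : ℝ) *
              (y i - x i) ^ k * (y i + x i) ^ (b i + 1 - k))) *
      ∏ i ∈ Finset.univ.filter (fun i => 2 ≤ a i),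
        ∑ k ∈ Finset.range (b i + 2),
          ((1 - (-1 : ℝ) ^ k) / 2) *
            ((Nat.factorial (a i - 2) * Nat.factorial (b i) : ℝ) /
              ((Nat.factorial (a i - 1 + k) : ℝ) * (Nat.factorial (b i + 1 - k) : ℝ))) *
            (y i - x i) ^ (a i - 1 + k) * (y i + x i) ^ (b i + 1 - k) := by
  have hprod_filter : ∀ (P : Fin n → Prop) [DecidablePred P] (f : Fin n → ℝ),
      ∏ i ∈ univ.filter P, f i = ∏ i : {i // P i}, f i :=
    fun P _ f => prod_subtype _ (fun i => by simp) f
  have hI : ∀ i, a i = 1 ↔ ¬2 ≤ a i := fun i => by have := ha i; omega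
  have hfilterI : univ.filter (fun i => a i = 1) = univ.filter (fun i => ¬2 ≤ a i) :=
    filter_congr fun i _ => hI i
  have hregion : {zw : (Fin n → ℝ) × ({i : Fin n // 2 ≤ a i} → ℝ) |
      (∀ i, a i = 1 → x i ≤ zw.1 i ∧ zw.1 i ≤ y i) ∧
      (∀ i : {i : Fin n // 2 ≤ a i}, x i.1 ≤ zw.1 i.1 ∧ zw.1 i.1 ≤ zw.2 i ∧ zw.2 i ≤ y i.1)} =
      {zw | (∀ i : {i : Fin n // ¬2 ≤ a i}, zw.1 i ∈ Icc (x i) (y i)) ∧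
        ∀ i : {i : Fin n // 2 ≤ a i},
          (zw.1 i, zw.2 i) ∈ {q : ℝ × ℝ | x i ≤ q.1 ∧ q.1 ≤ q.2 ∧ q.2 ≤ y i}} := by
    ext zw
    simp only [Set.mem_ofPred, Set.mem_Icc, hI, Subtype.forall]
  rw [hregion, hfilterI]
  simp only [hprod_filter]
  refine (setIntegral_splitPairs_eq_prod (fun i => 2 ≤ a i) (fun i => Icc (x i) (y i))
    (fun i => {q : ℝ × ℝ | x i ≤ q.1 ∧ q.1 ≤ q.2 ∧ q.2 ≤ y i}) (fun i z => z ^ b i)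
    (fun i q => (q.2 - q.1) ^ (a i - 2) * (q.2 + q.1) ^ b i)).trans ?_
  congr 1
  · exact prod_congr rfl fun i _ => setIntegral_Icc_pow (b i) (hxy i)
  · refine prod_congr rfl fun i _ => ?_
    rw [setIntegral_triangle _ _ (hxy i)]
    refine sum_congr rfl fun k _ => ?_
    rw [oddPart, triangleCoeff, show a i - 2 + 1 + k = a i - 1 + k by have := i.2; omega]
    ring

/-- Let `x ≤ y` in `ℝ^n` and `(a, b) ∈ ℕ₊^n × ℕ^n`, with `I = {i : a_i = 1}`
and `J = {i : a_i ≥ 2}`.  The Lebesgue integral over `(z, w) ∈ ℝ^n × ℝ^J` of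
`∏_{i∈I} z_i^{b_i} ∏_{i∈J} (w_i - z_i)^{a_i-2} (w_i + z_i)^{b_i}` over the region
`{x_i ≤ z_i ≤ y_i for i ∈ I, x_i ≤ z_i ≤ w_i ≤ y_i for i ∈ J}` equals the stated product
of one-dimensional values. -/
theorem stmt6 (n : ℕ) (hn : 1 ≤ n) (x y : Fin n → ℝ) (hxy : ∀ i, x i ≤ y i)
    (a b : Fin n → ℕ) (ha : ∀ i, 1 ≤ a i) :
    (∫ zw : (Fin n → ℝ) × ({i : Fin n // 2 ≤ a i} → ℝ) in
        {zw : (Fin n → ℝ) × ({i : Fin n // 2 ≤ a i} → ℝ) |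
          (∀ i, a i = 1 → x i ≤ zw.1 i ∧ zw.1 i ≤ y i) ∧
          (∀ i : {i : Fin n // 2 ≤ a i},
            x i.1 ≤ zw.1 i.1 ∧ zw.1 i.1 ≤ zw.2 i ∧ zw.2 i ≤ y i.1)},
        (∏ i ∈ Finset.univ.filter (fun i => a i = 1), zw.1 i ^ b i) *
          ∏ i : {i : Fin n // 2 ≤ a i},
            (zw.2 i - zw.1 i.1) ^ (a i.1 - 2) * (zw.2 i + zw.1 i.1) ^ b i.1) =
      (∏ i ∈ Finset.univ.filter (fun i => a i = 1),
        (1 / (((b i : ℝ) + 1) * 2 ^ (b i + 1)) *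
          ∑ k ∈ Finset.range (b i + 2),
            (1 - (-1 : ℝ) ^ k) * (Nat.choose (b i + 1) k : ℝ) *
              (y i - x i) ^ k * (y i + x i) ^ (b i + 1 - k))) *
      ∏ i ∈ Finset.univ.filter (fun i => 2 ≤ a i),
        ∑ k ∈ Finset.range (b i + 2),
          ((1 - (-1 : ℝ) ^ k) / 2) *
            ((Nat.factorial (a i - 2) * Nat.factorial (b i) : ℝ) /
              ((Nat.factorial (a i - 1 + k) : ℝ) * (Nat.factorial (b i + 1 - k) : ℝ))) *
            (y i - x i) ^ (a i - 1 + k) * (y i + x i) ^ (b i + 1 - k) :=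
  stmt6_general n x y hxy a b ha
end

section
/- Let n ≥ 1. In the ℝ-vector space of real-valued functions on the set of finite multisets of boxes in ℝ^n (with pointwise operations), the ℝ-linear span of the family {F_{a,b} : (a,b) ∈ ℕ₊^n × ℕ^n} equals the ℝ-linear span of the family {p_{a,b} : (a,b) ∈ ℕ₊^n × ℕ^n}. -/
/-!
Both families are images of one multilinear map, which sends a family `g` of functions of two
real variables to `M ↦ ∑_{(x, y) ∈ M} ∏_j g_j (x_j, y_j)`. For `p_{a,b}` the factors are
`(y - x)^a (y + x)^b`. For `F_{a,b}`, the rank invariant is a sum over the boxes of `M`, and by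
Fubini the integral for a single box factors into `∫_x^y t^b dt` (where `a_j = 1`) or
`∬_{x ≤ s ≤ t ≤ y} (t - s)^(a_j - 2) (t + s)^b` (where `a_j ≥ 2`). So it is enough to compare the
spans of these factors. Integrating the `t`-derivatives of `(y - t)^(a+1) (y + t)^e` and
`(t - s)^(c+1) (t + s)^e` gives triangular relations linking the double integrals, the integrals
`∫_x^y (y - t)^a (y + t)^e dt` and the monomials `(y - x)^a (y + x)^b` with `a ≥ 2`; the binomial
expansion of `y^(b+1) - x^(b+1)` in `y - x` and `y + x` accounts for `a = 1`.
-/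

open scoped Classical

def Box (n : ℕ) := {xy : (Fin n → ℝ) × (Fin n → ℝ) // ∀ j, xy.1 j < xy.2 j}

/-- The rank invariant `ρ_{u,v}(M)`: the number of boxes `(x, y)` in `M` (with
multiplicity) such that `x ≤ u`, `u ≤ v` and `v ≤ y` componentwise. -/
noncomputable def rankInv (n : ℕ) (M : Multiset (Box n)) (u v : Fin n → ℝ) : ℝ :=
  ((M.filter (fun box =>
      (∀ j, box.1.1 j ≤ u j) ∧ (∀ j, u j ≤ v j) ∧ (∀ j, v j ≤ box.1.2 j))).card : ℝ)

/-- `F_{a,b}(M)`: the Lebesgue integral over `(z, w) ∈ ℝ^n × ℝ^J` (where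
`J = {i : a_i ≥ 2}`, `I = {i : a_i = 1}`) of
`∏_{i∈J}(w_i - z_i)^{a_i-2} ∏_{i∈I} z_i^{b_i} ∏_{i∈J}(w_i + z_i)^{b_i} ρ_{z,z'}(M)`,
where `z'_i = z_i` for `i ∈ I` and `z'_i = w_i` for `i ∈ J`. -/
noncomputable def Finv (n : ℕ) (a b : Fin n → ℕ) (M : Multiset (Box n)) : ℝ :=
  ∫ zw : (Fin n → ℝ) × ({i : Fin n // 2 ≤ a i} → ℝ),
    (∏ i : {i : Fin n // 2 ≤ a i}, (zw.2 i - zw.1 i.1) ^ (a i.1 - 2)) *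
      (∏ i ∈ Finset.univ.filter (fun i => a i = 1), zw.1 i ^ b i) *
      (∏ i : {i : Fin n // 2 ≤ a i}, (zw.2 i + zw.1 i.1) ^ b i.1) *
      rankInv n M zw.1 (fun i => if h : 2 ≤ a i then zw.2 ⟨i, h⟩ else zw.1 i)

/-- `p_{a,b}(M) = Σ_{(x,y) ∈ M} ∏_j (y_j - x_j)^{a_j} (y_j + x_j)^{b_j}`. -/
noncomputable def pBox (n : ℕ) (a b : Fin n → ℕ) (M : Multiset (Box n)) : ℝ :=
  (M.map (fun xy => ∏ j, (xy.1.2 j - xy.1.1 j) ^ a j * (xy.1.2 j + xy.1.1 j) ^ b j)).sum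

open MeasureTheory Set Submodule Function

theorem Multiset.natCast_card_filter {α R : Type*} [AddCommMonoidWithOne R] (p : α → Prop)
    [DecidablePred p] (M : Multiset α) :
    ((M.filter p).card : R) = (M.map fun a => if p a then (1 : R) else 0).sum := by
  induction M using Multiset.induction_on with
  | empty => simp
  | cons a M ih => by_cases h : p a <;> simp [h, ih, add_comm]

theorem MeasureTheory.integral_multiset_sum_map {α ι : Type*} [MeasurableSpace α] {μ : Measure α}
    (M : Multiset ι) (f : ι → α → ℝ) (hf : ∀ i ∈ M, Integrable (f i) μ) :
    ∫ x, (M.map fun i => f i x).sum ∂μ = (M.map fun i => ∫ x, f i x ∂μ).sum := by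
  simp_rw [Finset.sum_multiset_map_count, ← Nat.cast_smul_eq_nsmul ℝ]
  rw [integral_finsetSum (f := fun i x => (M.count i : ℝ) • f i x) _
    fun i hi => (hf i (Multiset.mem_toFinset.1 hi)).const_mul _]
  simp_rw [integral_smul]

theorem intervalIntegral.integral_mul_add_mul {f g : ℝ → ℝ} (hf : Continuous f)
    (hg : Continuous g) (α β x y : ℝ) :
    ∫ t in x..y, (α * f t + β * g t) = α * (∫ t in x..y, f t) + β * ∫ t in x..y, g t := by
  rw [intervalIntegral.integral_add ((hf.intervalIntegrable x y).const_mul α)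
    ((hg.intervalIntegrable x y).const_mul β), intervalIntegral.integral_const_mul,
    intervalIntegral.integral_const_mul]

theorem integral_indicator_Icc_eq_intervalIntegral (f : ℝ → ℝ) {x y : ℝ} (hxy : x ≤ y) :
    ∫ s, (Icc x y).indicator f s = ∫ s in x..y, f s := by
  rw [integral_indicator measurableSet_Icc, integral_Icc_eq_integral_Ioc,
    intervalIntegral.integral_of_le hxy]

theorem integral_prod_filter_not_mul_prod_subtype {ι : Type*} [Fintype ι] (p : ι → Prop)
    [DecidablePred p] (f : ι → ℝ → ℝ) (g : ι → ℝ × ℝ → ℝ)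
    (hint : Integrable fun zw : (ι → ℝ) × ({i // p i} → ℝ) =>
      (∏ i ∈ Finset.univ.filter (fun i => ¬p i), f i (zw.1 i)) *
        ∏ j : {i // p i}, g j (zw.1 j, zw.2 j)) :
    ∫ zw : (ι → ℝ) × ({i // p i} → ℝ),
        (∏ i ∈ Finset.univ.filter (fun i => ¬p i), f i (zw.1 i)) *
          ∏ j : {i // p i}, g j (zw.1 j, zw.2 j) =
      ∏ i, if p i then ∫ s, ∫ t, g i (s, t) else ∫ s, f i s := by
  have hinner (z : ι → ℝ) :
      ∫ w : {i // p i} → ℝ, (∏ i ∈ Finset.univ.filter (fun i => ¬p i), f i (z i)) *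
        ∏ j : {i // p i}, g j (z j, w j) =
      ∏ i, if p i then ∫ t, g i (z i, t) else f i (z i) := by
    rw [integral_const_mul,
      integral_fintype_prod_volume_eq_prod (fun (j : {i // p i}) t => g j (z j, t)),
      ← Finset.prod_filter_not_mul_prod_filter Finset.univ p,
      Finset.prod_subtype (Finset.univ.filter p) (p := p) (by simp)]
    congr 1 <;> refine Finset.prod_congr rfl fun i hi => ?_
    · rw [if_neg (Finset.mem_filter.1 hi).2]
    · rw [if_pos i.2]
  rw [Measure.volume_eq_prod] at hint ⊢
  rw [integral_prod _ hint]
  simp only [hinner]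
  rw [integral_fintype_prod_volume_eq_prod (fun i s => if p i then ∫ t, g i (s, t) else f i s)]
  refine Finset.prod_congr rfl fun i _ => ?_
  split_ifs <;> rfl

theorem span_range_uncurry_eq_of_triangular {K V : Type*} [Field K] [AddCommGroup V]
    [Module K V] {A B : ℕ → ℕ → V} (α β : ℕ → ℕ → K) (hα : ∀ c e, α c e ≠ 0)
    (hβ : ∀ c, β c 0 = 0) (h : ∀ c e, B c e = α c e • A c e + β c e • A (c + 1) (e - 1)) :
    span K (range (uncurry A)) = span K (range (uncurry B)) := by
  apply le_antisymm
  · rw [span_le]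
    rintro _ ⟨⟨c, e⟩, rfl⟩
    induction e generalizing c with
    | zero =>
      have hA : A c 0 = (α c 0)⁻¹ • B c 0 := by
        rw [h, hβ, zero_smul, add_zero, inv_smul_smul₀ (hα c 0)]
      rw [uncurry_apply_pair, hA]
      exact smul_mem _ _ (subset_span ⟨(c, 0), rfl⟩)
    | succ e ih =>
      have hA : A c (e + 1) =
          (α c (e + 1))⁻¹ • (B c (e + 1) - β c (e + 1) • A (c + 1) e) := by
        rw [h, Nat.add_sub_cancel, add_sub_cancel_right, inv_smul_smul₀ (hα c _)]
      rw [uncurry_apply_pair, hA]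
      exact smul_mem _ _ (sub_mem (subset_span ⟨(c, e + 1), rfl⟩) (smul_mem _ _ (ih (c + 1))))
  · rw [span_le]
    rintro _ ⟨⟨c, e⟩, rfl⟩
    rw [uncurry_apply_pair, h]
    exact add_mem (smul_mem _ _ (subset_span ⟨(c, e), rfl⟩))
      (smul_mem _ _ (subset_span ⟨(c + 1, e - 1), rfl⟩))

theorem MultilinearMap.map_mem_span_image_pi {R ι N : Type*} {M : ι → Type*} [CommSemiring R]
    [Fintype ι] [∀ i, AddCommMonoid (M i)] [∀ i, Module R (M i)] [AddCommMonoid N] [Module R N]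
    (f : MultilinearMap R M N) {A : ∀ i, Set (M i)} {g : ∀ i, M i}
    (hg : ∀ i, g i ∈ span R (A i)) : f g ∈ span R (f '' univ.pi A) := by
  choose m c v hv using fun i => mem_span_set'.1 (hg i)
  obtain rfl : g = fun i => ∑ k, c i k • (v i k : M i) := funext fun i => (hv i).symm
  rw [f.map_sum]
  refine sum_mem fun r _ => ?_
  rw [f.map_smul_univ (fun i => c i (r i)) fun i => (v i (r i) : M i)]
  exact smul_mem _ _ (subset_span ⟨_, fun i _ => (v i (r i)).2, rfl⟩)

theorem MultilinearMap.span_image_pi_eq {R ι N : Type*} {M : ι → Type*} [CommSemiring R]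
    [Fintype ι] [∀ i, AddCommMonoid (M i)] [∀ i, Module R (M i)] [AddCommMonoid N] [Module R N]
    (f : MultilinearMap R M N) {A B : ∀ i, Set (M i)} (h : ∀ i, span R (A i) = span R (B i)) :
    span R (f '' univ.pi A) = span R (f '' univ.pi B) := by
  apply le_antisymm <;> rw [span_le] <;> rintro _ ⟨g, hg, rfl⟩
  · exact f.map_mem_span_image_pi fun i => h i ▸ subset_span (hg i trivial)
  · exact f.map_mem_span_image_pi fun i => (h i).symm ▸ subset_span (hg i trivial)

noncomputable section

def diffSumPow (a b : ℕ) (x y : ℝ) : ℝ := (y - x) ^ a * (y + x) ^ b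

def lineMoment (b : ℕ) (x y : ℝ) : ℝ := ∫ t in x..y, t ^ b

def edgeMoment (a e : ℕ) (x y : ℝ) : ℝ := ∫ t in x..y, diffSumPow a e t y

def triMoment (c e : ℕ) (x y : ℝ) : ℝ := ∫ s in x..y, ∫ t in s..y, diffSumPow c e s t

end

theorem continuous_diffSumPow (a e : ℕ) : Continuous (uncurry (diffSumPow a e)) := by
  unfold diffSumPow uncurry
  fun_prop

theorem hasDerivAt_diffSumPow_left (a e : ℕ) (x y : ℝ) :
    HasDerivAt (fun x => diffSumPow (a + 1) e x y)
      (-((a + 1) * diffSumPow a e x y) + e * diffSumPow (a + 1) (e - 1) x y) x := by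
  refine ((((hasDerivAt_id' x).const_sub y).fun_pow (a + 1)).fun_mul
    (((hasDerivAt_id' x).const_add y).fun_pow e)).congr_deriv ?_
  simp only [diffSumPow]
  push_cast
  ring

theorem hasDerivAt_diffSumPow_right (c e : ℕ) (x y : ℝ) :
    HasDerivAt (fun y => diffSumPow (c + 1) e x y)
      ((c + 1) * diffSumPow c e x y + e * diffSumPow (c + 1) (e - 1) x y) y := by
  refine ((((hasDerivAt_id' y).sub_const x).fun_pow (c + 1)).fun_mul
    (((hasDerivAt_id' y).add_const x).fun_pow e)).congr_deriv ?_
  simp only [diffSumPow]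
  push_cast
  ring

theorem continuous_intervalIntegral_diffSumPow (c e : ℕ) (y : ℝ) :
    Continuous fun s => ∫ t in s..y, diffSumPow c e s t := by
  simp_rw [intervalIntegral.integral_symm y]
  exact (intervalIntegral.continuous_parametric_intervalIntegral_of_continuous
    (continuous_diffSumPow c e) continuous_id).neg

theorem diffSumPow_succ_eq_edgeMoment (a e : ℕ) :
    diffSumPow (a + 1) e =
      ((a : ℝ) + 1) • edgeMoment a e + (-e : ℝ) • edgeMoment (a + 1) (e - 1) := by
  funext x y
  have h := intervalIntegral.integral_eq_sub_of_hasDerivAt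
    (fun t _ => (hasDerivAt_diffSumPow_left a e t y).neg)
    (Continuous.intervalIntegrable (by unfold diffSumPow; fun_prop) x y)
  simp only [neg_add, neg_neg, ← neg_mul] at h
  rw [intervalIntegral.integral_mul_add_mul (by unfold diffSumPow; fun_prop)
    (by unfold diffSumPow; fun_prop)] at h
  simp only [Pi.add_apply, Pi.smul_apply, smul_eq_mul, edgeMoment, h]
  simp [diffSumPow]

theorem edgeMoment_succ_eq_triMoment (c e : ℕ) :
    edgeMoment (c + 1) e =
      ((c : ℝ) + 1) • triMoment c e + (e : ℝ) • triMoment (c + 1) (e - 1) := by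
  funext x y
  have hinner (s : ℝ) : diffSumPow (c + 1) e s y =
      (c + 1) * (∫ t in s..y, diffSumPow c e s t) +
        e * ∫ t in s..y, diffSumPow (c + 1) (e - 1) s t := by
    rw [← intervalIntegral.integral_mul_add_mul (by unfold diffSumPow; fun_prop)
      (by unfold diffSumPow; fun_prop),
      intervalIntegral.integral_eq_sub_of_hasDerivAt
        (fun t _ => hasDerivAt_diffSumPow_right c e s t)
        (Continuous.intervalIntegrable (by unfold diffSumPow; fun_prop) s y)]
    simp [diffSumPow]
  simp only [edgeMoment, hinner, Pi.add_apply, Pi.smul_apply, smul_eq_mul, triMoment]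
  exact intervalIntegral.integral_mul_add_mul (continuous_intervalIntegral_diffSumPow c e y)
    (continuous_intervalIntegral_diffSumPow _ _ y) _ _ x y

theorem two_pow_mul_pow_sub_pow_eq (b : ℕ) (x y : ℝ) :
    2 ^ (b + 1) * (y ^ (b + 1) - x ^ (b + 1)) = 2 * (b + 1) * diffSumPow 1 b x y +
      ∑ m ∈ Finset.range b,
        (b + 1).choose (m + 2) * (1 - (-1) ^ m) * diffSumPow (m + 2) (b - (m + 1)) x y := by
  have hy : 2 * y = (y - x) + (y + x) := by ring
  have hx : 2 * x = -(y - x) + (y + x) := by ring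
  rw [mul_sub, ← mul_pow, ← mul_pow, hy, hx, add_pow, add_pow, ← Finset.sum_sub_distrib,
    Finset.sum_range_succ', Finset.sum_range_succ']
  simp only [diffSumPow, Nat.add_sub_add_right, Nat.choose_one_right, Nat.choose_zero_right,
    neg_pow (y - x), Nat.sub_zero, zero_add, pow_zero, one_mul, sub_self, add_zero]
  rw [add_comm]
  congr 1
  · push_cast
    ring
  · refine Finset.sum_congr rfl fun m _ => ?_
    ring

theorem lineMoment_sub_mem_span (b : ℕ) :
    lineMoment b - (2 ^ b : ℝ)⁻¹ • diffSumPow 1 b ∈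
      span ℝ (range fun p : ℕ × ℕ => diffSumPow (p.1 + 2) p.2) := by
  have h : lineMoment b - (2 ^ b : ℝ)⁻¹ • diffSumPow 1 b = ((2 : ℝ) ^ (b + 1) * (b + 1))⁻¹ •
      ∑ m ∈ Finset.range b, ((b + 1).choose (m + 2) * (1 - (-1) ^ m) : ℝ) •
        diffSumPow (m + 2) (b - (m + 1)) := by
    funext x y
    simp only [Pi.sub_apply, Pi.smul_apply, Finset.sum_apply, smul_eq_mul, lineMoment,
      integral_pow]
    rw [eq_sub_of_add_eq' (two_pow_mul_pow_sub_pow_eq b x y).symm]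
    field_simp
    ring
  rw [h]
  exact smul_mem _ _ (sum_mem fun m _ => smul_mem _ _ (subset_span ⟨(m, _), rfl⟩))

theorem span_lineMoment_triMoment :
    span ℝ (range lineMoment ∪ range (uncurry triMoment)) =
      span ℝ (range fun p : ℕ × ℕ => diffSumPow (p.1 + 1) p.2) := by
  have hTE := span_range_uncurry_eq_of_triangular _ _ (fun c e => by positivity)
    (fun c => Nat.cast_zero) edgeMoment_succ_eq_triMoment
  have hED := span_range_uncurry_eq_of_triangular (B := fun c e => diffSumPow (c + 2) e) _ _
    (fun c e => by positivity) (fun c => neg_eq_zero.2 Nat.cast_zero)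
    fun c e => diffSumPow_succ_eq_edgeMoment (c + 1) e
  have hT : span ℝ (range (uncurry triMoment)) =
      span ℝ (range fun p : ℕ × ℕ => diffSumPow (p.1 + 2) p.2) := hTE.trans hED
  have h21 : span ℝ (range fun p : ℕ × ℕ => diffSumPow (p.1 + 2) p.2) ≤
      span ℝ (range fun p : ℕ × ℕ => diffSumPow (p.1 + 1) p.2) :=
    span_mono (by rintro _ ⟨⟨c, e⟩, rfl⟩; exact ⟨(c + 1, e), rfl⟩)
  have hTL : span ℝ (range (uncurry triMoment)) ≤
      span ℝ (range lineMoment ∪ range (uncurry triMoment)) :=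
    span_mono subset_union_right
  apply le_antisymm
  · rw [span_le]
    rintro _ (⟨b, rfl⟩ | ⟨⟨c, e⟩, rfl⟩)
    · rw [← sub_add_cancel (lineMoment b) ((2 ^ b : ℝ)⁻¹ • diffSumPow 1 b)]
      exact add_mem (h21 (lineMoment_sub_mem_span b))
        (smul_mem _ _ (subset_span ⟨(0, b), rfl⟩))
    · exact h21 (hT ▸ subset_span ⟨(c, e), rfl⟩)
  · rw [span_le]
    rintro _ ⟨⟨_ | a, b⟩, rfl⟩
    · have h : diffSumPow 1 b = (2 ^ b : ℝ) •
          (lineMoment b - (lineMoment b - (2 ^ b : ℝ)⁻¹ • diffSumPow 1 b)) := by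
        rw [sub_sub_cancel, smul_inv_smul₀ (by positivity)]
      change diffSumPow 1 b ∈ _
      rw [h]
      exact smul_mem _ _
        (sub_mem (subset_span (.inl ⟨b, rfl⟩)) (hTL (hT ▸ lineMoment_sub_mem_span b)))
    · exact hTL (hT ▸ subset_span ⟨(a, b), rfl⟩)

noncomputable def boxMoment (n : ℕ) :
    MultilinearMap ℝ (fun _ : Fin n => ℝ → ℝ → ℝ) (Multiset (Box n) → ℝ) :=
  MultilinearMap.pi fun M => (M.map fun B : Box n =>
    (MultilinearMap.mkPiAlgebra ℝ (Fin n) ℝ).compLinearMap fun i =>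
      (LinearMap.proj (B.1.2 i) ∘ₗ LinearMap.proj (B.1.1 i) : (ℝ → ℝ → ℝ) →ₗ[ℝ] ℝ)).sum

theorem boxMoment_apply (n : ℕ) (g : Fin n → ℝ → ℝ → ℝ) (M : Multiset (Box n)) :
    boxMoment n g M = (M.map fun B => ∏ i, g i (B.1.1 i) (B.1.2 i)).sum := by
  induction M using Multiset.induction_on with
  | empty => simp [boxMoment]
  | cons B M ih => simp_all [boxMoment]

def triRegion (x y : ℝ) : Set (ℝ × ℝ) := {p | x ≤ p.1 ∧ p.1 ≤ p.2 ∧ p.2 ≤ y}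

theorem integral_integral_indicator_triRegion (F : ℝ → ℝ → ℝ) {x y : ℝ} (hxy : x ≤ y) :
    ∫ s, ∫ t, (triRegion x y).indicator (uncurry F) (s, t) = ∫ s in x..y, ∫ t in s..y, F s t := by
  have hinner (s : ℝ) : ∫ t, (triRegion x y).indicator (uncurry F) (s, t) =
      (Icc x y).indicator (fun s => ∫ t in s..y, F s t) s := by
    by_cases hs : s ∈ Icc x y
    · have h : (fun t => (triRegion x y).indicator (uncurry F) (s, t)) =
          (Icc s y).indicator (F s) := by
        ext t
        simp only [indicator_apply, triRegion, mem_ofPred_eq, mem_Icc, hs.1, true_and,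
          uncurry_apply_pair]
      rw [h, integral_indicator_Icc_eq_intervalIntegral _ hs.2, indicator_of_mem hs]
    · have h : (fun t => (triRegion x y).indicator (uncurry F) (s, t)) = 0 := by
        ext t
        exact indicator_of_notMem
          (fun (h : (s, t) ∈ triRegion x y) => hs ⟨h.1, h.2.1.trans h.2.2⟩) _
      rw [h, indicator_of_notMem hs, Pi.zero_def, integral_zero]
  simp_rw [hinner]
  exact integral_indicator_Icc_eq_intervalIntegral _ hxy

section FinvIntegrand

variable {n : ℕ}

/- `secondCorner a (z, w)` is the point `z'(z, w)` of the statement, and `cornerSet a x y` is the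
set of `(z, w)` at which the box `(x, y)` is counted by `ρ_{z, z'(z, w)}`. -/

def secondCorner (a : Fin n → ℕ) (zw : (Fin n → ℝ) × ({i : Fin n // 2 ≤ a i} → ℝ)) :
    Fin n → ℝ :=
  fun i => if h : 2 ≤ a i then zw.2 ⟨i, h⟩ else zw.1 i

def finvWeight (a b : Fin n → ℕ) (zw : (Fin n → ℝ) × ({i : Fin n // 2 ≤ a i} → ℝ)) : ℝ :=
  (∏ i : {i : Fin n // 2 ≤ a i}, (zw.2 i - zw.1 i.1) ^ (a i.1 - 2)) *
    (∏ i ∈ Finset.univ.filter (fun i => a i = 1), zw.1 i ^ b i) *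
    (∏ i : {i : Fin n // 2 ≤ a i}, (zw.2 i + zw.1 i.1) ^ b i.1)

def cornerSet (a : Fin n → ℕ) (x y : Fin n → ℝ) :
    Set ((Fin n → ℝ) × ({i : Fin n // 2 ≤ a i} → ℝ)) :=
  {zw | x ≤ zw.1 ∧ zw.1 ≤ secondCorner a zw ∧ secondCorner a zw ≤ y}

theorem Finv_eq_integral_sum (a b : Fin n → ℕ) (M : Multiset (Box n)) :
    Finv n a b M =
      ∫ zw, (M.map fun B => (cornerSet a B.1.1 B.1.2).indicator (finvWeight a b) zw).sum := by
  unfold Finv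
  congr 1
  funext zw
  rw [rankInv, Multiset.natCast_card_filter, ← Multiset.sum_map_mul_left]
  refine congrArg _ (Multiset.map_congr rfl fun B _ => ?_)
  simp [Set.indicator_apply, cornerSet, Pi.le_def, finvWeight, secondCorner]

theorem continuous_secondCorner (a : Fin n → ℕ) : Continuous (secondCorner a) :=
  continuous_pi fun i => by unfold secondCorner; split_ifs <;> fun_prop

theorem continuous_finvWeight (a b : Fin n → ℕ) : Continuous (finvWeight a b) := by
  unfold finvWeight
  fun_prop

theorem isCompact_cornerSet (a : Fin n → ℕ) (x y : Fin n → ℝ) : IsCompact (cornerSet a x y) := by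
  have hsc := continuous_secondCorner a
  refine (isCompact_Icc (a := (x, fun j => x j.1)) (b := (y, fun j => y j.1))).of_isClosed_subset
    ((isClosed_le continuous_const continuous_fst).inter
      ((isClosed_le continuous_fst hsc).inter (isClosed_le hsc continuous_const))) ?_
  rintro zw ⟨hx, hz, hy⟩
  have hw (j : {i // 2 ≤ a i}) : secondCorner a zw j = zw.2 j := dif_pos j.2
  exact ⟨⟨hx, fun j => hw j ▸ (hx j).trans (hz j)⟩, ⟨hz.trans hy, fun j => hw j ▸ hy j⟩⟩

theorem integrable_indicator_cornerSet (a b : Fin n → ℕ) (x y : Fin n → ℝ) :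
    Integrable ((cornerSet a x y).indicator (finvWeight a b)) := by
  rw [integrable_indicator_iff (isCompact_cornerSet a x y).isClosed.measurableSet]
  exact (continuous_finvWeight a b).continuousOn.integrableOn_compact (isCompact_cornerSet a x y)

theorem indicator_cornerSet_eq_prod {a : Fin n → ℕ} (ha : ∀ j, 1 ≤ a j) (b : Fin n → ℕ)
    (x y : Fin n → ℝ) (zw : (Fin n → ℝ) × ({i : Fin n // 2 ≤ a i} → ℝ)) :
    (cornerSet a x y).indicator (finvWeight a b) zw =
      (∏ i ∈ Finset.univ.filter (fun i => ¬2 ≤ a i),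
          (Icc (x i) (y i)).indicator (· ^ b i) (zw.1 i)) *
        ∏ j : {i // 2 ≤ a i}, (triRegion (x j) (y j)).indicator
          (uncurry (diffSumPow (a j - 2) (b j))) (zw.1 j, zw.2 j) := by
  have hI : Finset.univ.filter (fun i => a i = 1) = Finset.univ.filter (fun i => ¬2 ≤ a i) :=
    Finset.filter_congr fun i _ => by have := ha i; omega
  have hmem : zw ∈ cornerSet a x y ↔ (∀ i ∈ Finset.univ.filter (fun i => ¬2 ≤ a i),
      zw.1 i ∈ Icc (x i) (y i)) ∧ ∀ j ∈ (Finset.univ : Finset {i // 2 ≤ a i}),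
        (zw.1 j, zw.2 j) ∈ triRegion (x j) (y j) := by
    simp only [cornerSet, secondCorner, mem_ofPred_eq, Pi.le_def, Finset.mem_filter,
      Finset.mem_univ, true_and, forall_const, mem_Icc, triRegion, Subtype.forall]
    constructor
    · rintro ⟨h1, h2, h3⟩
      exact ⟨fun i hi => ⟨h1 i, by simpa [hi] using h3 i⟩,
        fun i hi => ⟨h1 i, by simpa [hi] using h2 i, by simpa [hi] using h3 i⟩⟩
    · rintro ⟨hI, hJ⟩
      refine ⟨fun i => ?_, fun i => ?_, fun i => ?_⟩ <;> by_cases hi : 2 ≤ a i <;>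
        simp [hi, hI i, hJ i]
  simp only [indicator_apply, Finset.prod_ite_zero, ite_zero_mul_ite_zero]
  split_ifs with h1 h2 h2
  · rw [finvWeight, hI]
    simp only [uncurry_apply_pair, diffSumPow, Finset.prod_mul_distrib]
    ring
  · exact absurd (hmem.1 h1) h2
  · exact absurd (hmem.2 h2) h1
  · rfl

theorem integral_indicator_cornerSet {a : Fin n → ℕ} (ha : ∀ j, 1 ≤ a j) (b : Fin n → ℕ)
    {x y : Fin n → ℝ} (hxy : x ≤ y) :
    ∫ zw, (cornerSet a x y).indicator (finvWeight a b) zw =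
      ∏ i, (if 2 ≤ a i then triMoment (a i - 2) (b i) else lineMoment (b i)) (x i) (y i) := by
  have hint := integrable_indicator_cornerSet a b x y
  rw [funext (indicator_cornerSet_eq_prod ha b x y)] at hint
  simp_rw [indicator_cornerSet_eq_prod ha b x y]
  rw [integral_prod_filter_not_mul_prod_subtype _ (fun i => (Icc (x i) (y i)).indicator (· ^ b i))
    (fun i => (triRegion (x i) (y i)).indicator (uncurry (diffSumPow (a i - 2) (b i)))) hint]
  refine Finset.prod_congr rfl fun i _ => ?_
  split_ifs
  · exact integral_integral_indicator_triRegion _ (hxy i)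
  · exact integral_indicator_Icc_eq_intervalIntegral _ (hxy i)

theorem Finv_eq_boxMoment {a : Fin n → ℕ} (ha : ∀ j, 1 ≤ a j) (b : Fin n → ℕ) :
    Finv n a b = boxMoment n fun i =>
      if 2 ≤ a i then triMoment (a i - 2) (b i) else lineMoment (b i) := by
  funext M
  rw [Finv_eq_integral_sum,
    integral_multiset_sum_map _ _ fun B _ => integrable_indicator_cornerSet a b _ _,
    boxMoment_apply]
  exact congrArg _
    (Multiset.map_congr rfl fun B _ => integral_indicator_cornerSet ha b fun j => (B.2 j).le)

end FinvIntegrand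

theorem pBox_eq_boxMoment {n : ℕ} (a b : Fin n → ℕ) :
    pBox n a b = boxMoment n fun i => diffSumPow (a i) (b i) := by
  funext M
  rw [boxMoment_apply]
  rfl

theorem setOf_Finv_eq_image (n : ℕ) :
    {f | ∃ a b : Fin n → ℕ, (∀ j, 1 ≤ a j) ∧ f = Finv n a b} =
      boxMoment n '' univ.pi fun _ => range lineMoment ∪ range (uncurry triMoment) := by
  ext f
  constructor
  · rintro ⟨a, b, ha, rfl⟩
    refine ⟨_, fun i _ => ?_, (Finv_eq_boxMoment ha b).symm⟩
    split_ifs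
    · exact .inr ⟨(a i - 2, b i), rfl⟩
    · exact .inl ⟨b i, rfl⟩
  · rintro ⟨g, hg, rfl⟩
    have hblock (i : Fin n) : ∃ a b : ℕ, 1 ≤ a ∧
        (if 2 ≤ a then triMoment (a - 2) b else lineMoment b) = g i := by
      rcases hg i trivial with ⟨e, he⟩ | ⟨⟨c, e⟩, he⟩
      · exact ⟨1, e, le_rfl, by simpa using he⟩
      · exact ⟨c + 2, e, by omega, by simpa using he⟩
    choose a b ha hab using hblock
    exact ⟨a, b, ha, by rw [Finv_eq_boxMoment ha]; exact congrArg _ (funext hab).symm⟩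

theorem setOf_pBox_eq_image (n : ℕ) :
    {f | ∃ a b : Fin n → ℕ, (∀ j, 1 ≤ a j) ∧ f = pBox n a b} =
      boxMoment n '' univ.pi fun _ => range fun p : ℕ × ℕ => diffSumPow (p.1 + 1) p.2 := by
  ext f
  constructor
  · rintro ⟨a, b, ha, rfl⟩
    exact ⟨_, fun i _ => ⟨(a i - 1, b i), by simp only [Nat.sub_add_cancel (ha i)]⟩,
      (pBox_eq_boxMoment a b).symm⟩
  · rintro ⟨g, hg, rfl⟩
    choose p hp using fun i => hg i trivial
    exact ⟨fun i => (p i).1 + 1, fun i => (p i).2, fun i => Nat.le_add_left 1 _,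
      by rw [pBox_eq_boxMoment]; exact congrArg _ (funext hp).symm⟩

theorem stmt7_general (n : ℕ) :
    Submodule.span ℝ {f : Multiset (Box n) → ℝ |
        ∃ a b : Fin n → ℕ, (∀ j, 1 ≤ a j) ∧ f = Finv n a b} =
      Submodule.span ℝ {f : Multiset (Box n) → ℝ |
        ∃ a b : Fin n → ℕ, (∀ j, 1 ≤ a j) ∧ f = pBox n a b} := by
  rw [setOf_Finv_eq_image, setOf_pBox_eq_image]
  exact (boxMoment n).span_image_pi_eq fun _ => span_lineMoment_triMoment

/-- In the ℝ-vector space of real-valued functions on the set of finite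
multisets of boxes in `ℝ^n`, the span of `{F_{a,b} : (a,b) ∈ ℕ₊^n × ℕ^n}` equals the span
of `{p_{a,b} : (a,b) ∈ ℕ₊^n × ℕ^n}`. -/
theorem stmt7 (n : ℕ) (hn : 1 ≤ n) :
    Submodule.span ℝ {f : Multiset (Box n) → ℝ |
        ∃ a b : Fin n → ℕ, (∀ j, 1 ≤ a j) ∧ f = Finv n a b} =
      Submodule.span ℝ {f : Multiset (Box n) → ℝ |
        ∃ a b : Fin n → ℕ, (∀ j, 1 ≤ a j) ∧ f = pBox n a b} :=
  stmt7_general n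
end

section
/- Let m, n ≥ 1 and let X, Y : {1,…,m} → ℝ^n × ℝ^n be two m-tuples of pairs of points. If there is no permutation σ of {1,…,m} with X∘σ = Y, then there exists a polynomial f in the variables x_{ij}, y_{ij} (1 ≤ i ≤ m, 1 ≤ j ≤ n) over ℝ that is invariant under simultaneous permutation of the index i in all variables, such that f evaluated at the point determined by X differs from f evaluated at the point determined by Y. -/
/-!
If `Y` is not a rearrangement of `X`, some point `u` occurs with different multiplicities in
`X` and `Y`. Over a field, a product of affine linear forms gives a polynomial `g` on a single
pair of points that equals `1` at `u` and vanishes at every other point occurring in `X` or `Y`.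
The power sum `∑ i, g (x_i, y_i)` is invariant under permuting `i`, and at `X` and `Y` it
evaluates to the two (different) multiplicities of `u`.
-/

open MvPolynomial Finset

lemma Equiv.Perm.exists_comp_eq_of_card_filter_eq {α β : Type*} [Fintype α] [DecidableEq β]
    (f g : α → β) (h : ∀ b, #{a | f a = b} = #{a | g a = b}) :
    ∃ σ : Equiv.Perm α, f ∘ σ = g := by
  have e : ∀ b, {a // g a = b} ≃ {a // f a = b} := fun b =>
    Fintype.equivOfCardEq (by simp only [Fintype.card_subtype, h])
  refine ⟨(Equiv.sigmaFiberEquiv g).symm.trans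
    ((Equiv.sigmaCongrRight e).trans (Equiv.sigmaFiberEquiv f)), funext fun a => ?_⟩
  exact (e (g a) ⟨a, rfl⟩).2

lemma Fintype.sum_comp_eq_card_filter_eq {ι α R : Type*} [Fintype ι] [DecidableEq α]
    [AddCommMonoidWithOne R] (Z : ι → α) (u : α) (w : α → R) (hu : w u = 1)
    (hw : ∀ i, Z i ≠ u → w (Z i) = 0) :
    ∑ i, w (Z i) = #{i | Z i = u} := by
  rw [← sum_boole]
  refine Finset.sum_congr rfl fun i _ => ?_
  split_ifs with hi
  · rw [hi, hu]
  · exact hw i hi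

namespace MvPolynomial

lemma exists_eval_eq_one_of_ne {σ K : Type*} [Field K] {u v : σ → K} (huv : v ≠ u) :
    ∃ p : MvPolynomial σ K, eval u p = 1 ∧ eval v p = 0 := by
  obtain ⟨k, hk⟩ := Function.ne_iff.mp huv
  have hk' : u k - v k ≠ 0 := sub_ne_zero.mpr hk.symm
  exact ⟨C (u k - v k)⁻¹ * (X k - C (v k)), by simp [hk'], by simp⟩

lemma exists_eval_eq_one_eval_eq_zero {σ K : Type*} [Field K] (s : Finset (σ → K))
    (u : σ → K) : ∃ p : MvPolynomial σ K, eval u p = 1 ∧ ∀ v ∈ s, v ≠ u → eval v p = 0 := by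
  have hsep : ∀ v, ∃ q : MvPolynomial σ K, eval u q = 1 ∧ (v ≠ u → eval v q = 0) := fun v => by
    by_cases huv : v = u
    · exact ⟨1, map_one _, fun h => absurd huv h⟩
    · obtain ⟨q, hqu, hqv⟩ := exists_eval_eq_one_of_ne huv
      exact ⟨q, hqu, fun _ => hqv⟩
  choose q hqu hqv using hsep
  classical
  refine ⟨∏ v ∈ s.erase u, q v, by simp [hqu], fun v hv huv => ?_⟩
  rw [map_prod]
  exact prod_eq_zero (mem_erase.mpr ⟨huv, hv⟩) (hqv v huv)

lemma rename_sum_rename_of_comp_eq {ι τ υ R : Type*} [Fintype ι] [CommSemiring R]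
    (e : ι → τ → υ) (σ : Equiv.Perm ι) (ρ : υ → υ) (hρ : ∀ i, ρ ∘ e i = e (σ i))
    (g : MvPolynomial τ R) :
    rename ρ (∑ i, rename (e i) g) = ∑ i, rename (e i) g := by
  simp only [map_sum, rename_rename, hρ]
  exact Equiv.sum_comp σ fun i => rename (e i) g

lemma eval_sum_rename {ι τ υ R : Type*} [Fintype ι] [CommSemiring R] (e : ι → τ → υ)
    (x : υ → R) (g : MvPolynomial τ R) :
    eval x (∑ i, rename (e i) g) = ∑ i, eval (x ∘ e i) g := by
  simp only [map_sum, eval_rename]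

theorem exists_sum_eval_ne_of_not_exists_perm {ι σ K : Type*} [Fintype ι] [Field K] [CharZero K]
    (X Y : ι → σ → K) (h : ¬∃ τ : Equiv.Perm ι, X ∘ τ = Y) :
    ∃ g : MvPolynomial σ K, ∑ i, eval (X i) g ≠ ∑ i, eval (Y i) g := by
  classical
  obtain ⟨u, hu⟩ : ∃ u, #{i | X i = u} ≠ #{i | Y i = u} := by
    by_contra! hfib
    exact h (Equiv.Perm.exists_comp_eq_of_card_filter_eq X Y hfib)
  obtain ⟨g, hgu, hg⟩ := exists_eval_eq_one_eval_eq_zero (univ.image X ∪ univ.image Y) u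
  have hX := Fintype.sum_comp_eq_card_filter_eq X u (fun v => eval v g) hgu
    fun i => hg (X i) (mem_union_left _ (mem_image_of_mem X (mem_univ i)))
  have hY := Fintype.sum_comp_eq_card_filter_eq Y u (fun v => eval v g) hgu
    fun i => hg (Y i) (mem_union_right _ (mem_image_of_mem Y (mem_univ i)))
  refine ⟨g, ?_⟩
  rw [hX, hY]
  exact_mod_cast hu

end MvPolynomial

theorem stmt8_general (m n : ℕ)
    (X Y : Fin m → (Fin n → ℝ) × (Fin n → ℝ))
    (h : ¬∃ σ : Equiv.Perm (Fin m), X ∘ σ = Y) :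
    ∃ f : MvPolynomial ((Fin m × Fin n) ⊕ (Fin m × Fin n)) ℝ,
      (∀ σ : Equiv.Perm (Fin m),
        rename (Sum.map (fun p : Fin m × Fin n => (σ p.1, p.2))
          (fun p : Fin m × Fin n => (σ p.1, p.2))) f = f) ∧
      eval (Sum.elim (fun p : Fin m × Fin n => (X p.1).1 p.2)
          (fun p : Fin m × Fin n => (X p.1).2 p.2)) f ≠
        eval (Sum.elim (fun p : Fin m × Fin n => (Y p.1).1 p.2)
          (fun p : Fin m × Fin n => (Y p.1).2 p.2)) f := by
  let E := (Equiv.sumArrowEquivProdArrow (Fin n) (Fin n) ℝ).symm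
  let e (i : Fin m) : Fin n ⊕ Fin n → (Fin m × Fin n) ⊕ (Fin m × Fin n) :=
    Sum.map (fun j => (i, j)) (fun j => (i, j))
  have hE : ¬∃ σ : Equiv.Perm (Fin m), (E ∘ X) ∘ σ = E ∘ Y := fun ⟨σ, hσ⟩ =>
    h ⟨σ, E.injective.comp_left hσ⟩
  obtain ⟨g, hg⟩ := exists_sum_eval_ne_of_not_exists_perm (E ∘ X) (E ∘ Y) hE
  refine ⟨∑ i, rename (e i) g, fun σ => ?_, ?_⟩
  · exact rename_sum_rename_of_comp_eq e σ _ (fun i => funext fun k => by cases k <;> rfl) g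
  · have hpoint (Z : Fin m → (Fin n → ℝ) × (Fin n → ℝ)) (i : Fin m) :
        Sum.elim (fun p : Fin m × Fin n => (Z p.1).1 p.2) (fun p => (Z p.1).2 p.2) ∘ e i =
          E (Z i) :=
      funext fun k => by cases k <;> rfl
    simpa only [eval_sum_rename, hpoint, Function.comp_apply] using hg

/-- If two `m`-tuples `X, Y` of pairs of points in `ℝ^n × ℝ^n` do not differ
by a permutation, then there is a polynomial in the variables `x_{ij}, y_{ij}` (here
`Sum.inl (i,j) = x_{ij}`, `Sum.inr (i,j) = y_{ij}`), invariant under simultaneous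
permutation of the index `i`, taking different values at the evaluation points determined
by `X` and `Y`. -/
theorem stmt8 (m n : ℕ) (hm : 1 ≤ m) (hn : 1 ≤ n)
    (X Y : Fin m → (Fin n → ℝ) × (Fin n → ℝ))
    (h : ¬∃ σ : Equiv.Perm (Fin m), X ∘ σ = Y) :
    ∃ f : MvPolynomial ((Fin m × Fin n) ⊕ (Fin m × Fin n)) ℝ,
      (∀ σ : Equiv.Perm (Fin m),
        rename (Sum.map (fun p : Fin m × Fin n => (σ p.1, p.2))
          (fun p : Fin m × Fin n => (σ p.1, p.2))) f = f) ∧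
      eval (Sum.elim (fun p : Fin m × Fin n => (X p.1).1 p.2)
          (fun p : Fin m × Fin n => (X p.1).2 p.2)) f ≠
        eval (Sum.elim (fun p : Fin m × Fin n => (Y p.1).1 p.2)
          (fun p : Fin m × Fin n => (Y p.1).2 p.2)) f :=
  stmt8_general m n X Y h
end

section
/- Let n ≥ 1 and let A, B be finite multisets of pairs (x, y) ∈ ℝ^n × ℝ^n. If q_{a,b}(A) = q_{a,b}(B) for every (a, b) ∈ ℕ^n × ℕ^n with (a, b) ≠ (0, 0), then the multisets obtained from A and B by removing all copies of the zero pair (0, 0) are equal. -/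
/-!
Both multisets are read as multisets of points of `ℝ^(2n)`, where the hypothesis says that every
monomial without constant term has the same sum over them; by linearity so does every polynomial
`P` with `P(0) = 0`. For a point `s ≠ 0`, a product of affine factors vanishing at `0` and at the
other points of `A + B` and equal to `1` at `s` is such a polynomial, and its sum over a multiset
is the multiplicity of `s`.
-/

open scoped Classical

/-- `q_{a,b}(M) = Σ_{(x,y) ∈ M} ∏_j x_j^{a_j} y_j^{b_j}`. -/
noncomputable def qInv (n : ℕ) (a b : Fin n → ℕ)
    (M : Multiset ((Fin n → ℝ) × (Fin n → ℝ))) : ℝ :=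
  (M.map (fun xy => ∏ j, xy.1 j ^ a j * xy.2 j ^ b j)).sum

namespace MvPolynomial

variable {σ K : Type*} [Field K]

theorem exists_eval_eq_one_and_eval_eq_zero {s t : σ → K} (hst : s ≠ t) :
    ∃ P : MvPolynomial σ K, eval s P = 1 ∧ eval t P = 0 := by
  obtain ⟨j, hj⟩ := Function.ne_iff.mp hst
  refine ⟨C (s j - t j)⁻¹ * (X j - C (t j)), ?_, ?_⟩ <;> simp [sub_ne_zero.mpr hj]

theorem exists_eval_eq_one_and_forall_eval_eq_zero (T : Finset (σ → K)) {s : σ → K}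
    (hs : s ∉ T) : ∃ P : MvPolynomial σ K, eval s P = 1 ∧ ∀ t ∈ T, eval t P = 0 := by
  have : ∀ t ∈ T, ∃ P : MvPolynomial σ K, eval s P = 1 ∧ eval t P = 0 := fun t ht =>
    exists_eval_eq_one_and_eval_eq_zero (ne_of_mem_of_not_mem ht hs).symm
  choose! P hPs hPt using this
  refine ⟨∏ t ∈ T, P t, ?_, fun t ht => ?_⟩ <;> rw [map_prod]
  · exact Finset.prod_eq_one hPs
  · exact Finset.prod_eq_zero ht (hPt t ht)

end MvPolynomial

open MvPolynomial

section Moments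

variable {σ : Type*}

theorem sum_map_eval_eq_of_sum_map_monomial_eq {R : Type*} [CommSemiring R]
    {A B : Multiset (σ → R)}
    (h : ∀ d : σ →₀ ℕ, d ≠ 0 →
      (A.map fun x => d.prod fun i k => x i ^ k).sum =
        (B.map fun x => d.prod fun i k => x i ^ k).sum)
    {P : MvPolynomial σ R} (hP : constantCoeff P = 0) :
    (A.map fun x => eval x P).sum = (B.map fun x => eval x P).sum := by
  have expand : ∀ M : Multiset (σ → R), (M.map fun x => eval x P).sum
      = ∑ d ∈ P.support, coeff d P * (M.map fun x => d.prod fun i k => x i ^ k).sum := by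
    have eval_eq : ∀ x : σ → R,
        eval x P = ∑ d ∈ P.support, coeff d P * d.prod fun i k => x i ^ k := fun x => by
      conv_lhs => rw [as_sum P]
      simp only [map_sum, eval_monomial]
    intro M
    simp_rw [eval_eq, Multiset.sum_map_sum, Multiset.sum_map_mul_left]
  rw [expand, expand]
  refine Finset.sum_congr rfl fun d hd => ?_
  rw [h d]
  rintro rfl
  exact mem_support_iff.mp hd hP

theorem count_eq_of_sum_map_monomial_eq {K : Type*} [Field K] [CharZero K] [DecidableEq (σ → K)]
    {A B : Multiset (σ → K)}
    (h : ∀ d : σ →₀ ℕ, d ≠ 0 →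
      (A.map fun x => d.prod fun i k => x i ^ k).sum =
        (B.map fun x => d.prod fun i k => x i ^ k).sum)
    {s : σ → K} (hs : s ≠ 0) : A.count s = B.count s := by
  obtain ⟨P, hPs, hPT⟩ := exists_eval_eq_one_and_forall_eval_eq_zero
    ((insert 0 (A + B).toFinset).erase s) (Finset.notMem_erase s _)
  have hP : constantCoeff P = 0 := by
    rw [← eval_zero]
    exact hPT 0 (Finset.mem_erase.mpr ⟨hs.symm, Finset.mem_insert_self _ _⟩)
  have sum_eq_count : ∀ M ≤ A + B, (M.map fun x => eval x P).sum = M.count s := by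
    intro M hM
    rw [Multiset.sum_map_eq_nsmul_single s fun t hts htM => hPT t <| Finset.mem_erase.mpr
      ⟨hts, Finset.mem_insert_of_mem (Multiset.mem_toFinset.mpr (Multiset.mem_of_le hM htM))⟩,
      hPs, nsmul_one]
  exact_mod_cast (sum_eq_count A (Multiset.le_add_right A B)).symm.trans
    ((sum_map_eval_eq_of_sum_map_monomial_eq h hP).trans
      (sum_eq_count B (Multiset.le_add_left B A)))

end Moments

theorem qInv_eq_sum_map_prod_pow (n : ℕ) (d : Fin n ⊕ Fin n →₀ ℕ)
    (M : Multiset ((Fin n → ℝ) × (Fin n → ℝ))) :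
    qInv n (fun j => d (.inl j)) (fun j => d (.inr j)) M
      = ((M.map (RingEquiv.sumArrowEquivProdArrow (Fin n) (Fin n) ℝ).symm).map
          fun x => d.prod fun i k => x i ^ k).sum := by
  rw [qInv, Multiset.map_map]
  congr 1
  refine Multiset.map_congr rfl fun xy _ => ?_
  rw [Function.comp_apply, Finsupp.prod_fintype _ _ fun _ => pow_zero _, Fintype.prod_sum_type,
    ← Finset.prod_mul_distrib]
  rfl

theorem stmt9_general (n : ℕ)
    (A B : Multiset ((Fin n → ℝ) × (Fin n → ℝ)))
    (h : ∀ a b : Fin n → ℕ, (a, b) ≠ (0, 0) → qInv n a b A = qInv n a b B) :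
    A.filter (fun xy => xy ≠ 0) = B.filter (fun xy => xy ≠ 0) := by
  set e := (RingEquiv.sumArrowEquivProdArrow (Fin n) (Fin n) ℝ).symm
  have moments : ∀ d : Fin n ⊕ Fin n →₀ ℕ, d ≠ 0 →
      ((A.map e).map fun x => d.prod fun i k => x i ^ k).sum
        = ((B.map e).map fun x => d.prod fun i k => x i ^ k).sum := by
    intro d hd
    rw [← qInv_eq_sum_map_prod_pow, ← qInv_eq_sum_map_prod_pow]
    refine h _ _ fun hab => hd ?_
    ext (j | j)
    exacts [congrFun (congrArg Prod.fst hab) j, congrFun (congrArg Prod.snd hab) j]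
  ext s
  simp only [Multiset.count_filter]
  split_ifs with hs
  · rw [← Multiset.count_map_eq_count' e A e.injective,
      ← Multiset.count_map_eq_count' e B e.injective]
    exact count_eq_of_sum_map_monomial_eq moments ((map_ne_zero_iff e e.injective).mpr hs)
  · rfl

/-- If `q_{a,b}(A) = q_{a,b}(B)` for all `(a,b) ≠ (0,0)`, then `A` and `B`
agree after removing all copies of the zero pair. -/
theorem stmt9 (n : ℕ) (hn : 1 ≤ n)
    (A B : Multiset ((Fin n → ℝ) × (Fin n → ℝ)))
    (h : ∀ a b : Fin n → ℕ, (a, b) ≠ (0, 0) → qInv n a b A = qInv n a b B) :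
    A.filter (fun xy => xy ≠ 0) = B.filter (fun xy => xy ≠ 0) :=
  stmt9_general n A B h
end

section
/- Let n ≥ 1 and let A, B, C, D be finite multisets of pairs (x, y) ∈ ℝ^n × ℝ^n. If q_{a,b}(A) − q_{a,b}(B) = q_{a,b}(C) − q_{a,b}(D) for every (a, b) ∈ ℕ^n × ℕ^n with (a, b) ≠ (0, 0), then the multisets obtained from A + D and from B + C (multiset sum) by removing all copies of the zero pair (0, 0) are equal. -/
open scoped Classical

/-!
Rearranging, the multisets `A + D` and `B + C` have the same power sums `q_{a,b}` for every
nonconstant monomial, hence by linearity the same sums `Σ P(z)` for every polynomial `P` in the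
`2n` coordinates with `P(0) = 0`. Given a nonzero point `p`, take for `P` a product of linear
forms, one vanishing at each other point of `A + B + C + D` and at `0`, but none at `p`: then
`Σ P(z)` is the multiplicity of `p` times `P(p) ≠ 0`, so both multiplicities agree.
-/

namespace MvPolynomial

variable {σ R : Type*}

lemma sum_map_eval_eq_of_forall_monomial [CommSemiring R] {M N : Multiset (σ → R)}
    (h : ∀ e ≠ 0, (M.map fun z => eval z (monomial e 1)).sum =
      (N.map fun z => eval z (monomial e 1)).sum)
    {P : MvPolynomial σ R} (hP : constantCoeff P = 0) :
    (M.map fun z => eval z P).sum = (N.map fun z => eval z P).sum := by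
  have expand : ∀ L : Multiset (σ → R), (L.map fun z => eval z P).sum =
      ∑ e ∈ P.support, coeff e P * (L.map fun z => eval z (monomial e 1)).sum := by
    intro L
    conv_lhs => rw [P.as_sum]
    simp_rw [← Multiset.sum_map_mul_left, ← Multiset.sum_map_sum, map_sum, eval_monomial,
      Finsupp.prod, one_mul]
  rw [expand, expand]
  refine Finset.sum_congr rfl fun e he => ?_
  rw [h e ?_]
  rintro rfl
  exact mem_support_iff.mp he (by rwa [← constantCoeff_eq])

lemma exists_eval_ne_zero_forall_eval_eq_zero [CommRing R] [IsDomain R] {p : σ → R}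
    {T : Finset (σ → R)} (hp : p ∉ T) :
    ∃ Q : MvPolynomial σ R, eval p Q ≠ 0 ∧ ∀ w ∈ T, eval w Q = 0 := by
  have separating : ∀ w ∈ T, ∃ s, w s ≠ p s := fun w hw =>
    Function.ne_iff.mp (ne_of_mem_of_not_mem hw hp)
  choose s hs using separating
  refine ⟨∏ w ∈ T.attach, (X (s w w.2) - C (w.1 (s w w.2))), ?_, fun w hw => ?_⟩
  · simp only [map_prod, map_sub, eval_X, eval_C]
    exact Finset.prod_ne_zero_iff.mpr fun w _ => sub_ne_zero.mpr (hs w w.2).symm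
  · rw [map_prod]
    exact Finset.prod_eq_zero (Finset.mem_attach _ ⟨w, hw⟩) (by simp)

theorem filter_ne_zero_eq_of_forall_monomial [CommRing R] [IsDomain R] [CharZero R]
    {M N : Multiset (σ → R)}
    (h : ∀ e ≠ 0, (M.map fun z => eval z (monomial e 1)).sum =
      (N.map fun z => eval z (monomial e 1)).sum) :
    M.filter (· ≠ 0) = N.filter (· ≠ 0) := by
  ext p
  by_cases hp : p = 0
  · simp [hp]
  simp only [Multiset.count_filter_of_pos (p := (· ≠ 0)) hp]
  obtain ⟨Q, hQp, hQ⟩ := exists_eval_ne_zero_forall_eval_eq_zero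
    (p := p) (T := insert 0 ((M + N).toFinset.erase p)) (by simp [hp])
  have hQ0 : constantCoeff Q = 0 := by
    rw [← eval_zero]
    exact hQ 0 (Finset.mem_insert_self _ _)
  have count_smul : ∀ L ≤ M + N, (L.map fun z => eval z Q).sum = L.count p • eval p Q :=
    fun L hL => Multiset.sum_map_eq_nsmul_single p fun w hwp hw =>
      hQ w (Finset.mem_insert_of_mem (by simpa [hwp] using Multiset.mem_of_le hL hw))
  have hsum := sum_map_eval_eq_of_forall_monomial h hQ0
  rw [count_smul M (Multiset.le_add_right M N), count_smul N (Multiset.le_add_left N M),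
    nsmul_eq_mul, nsmul_eq_mul] at hsum
  exact_mod_cast mul_right_cancel₀ hQp hsum

end MvPolynomial

open MvPolynomial

lemma qInv_add (n : ℕ) (a b : Fin n → ℕ) (M N : Multiset ((Fin n → ℝ) × (Fin n → ℝ))) :
    qInv n a b (M + N) = qInv n a b M + qInv n a b N := by
  simp only [qInv, Multiset.map_add, Multiset.sum_add]

lemma qInv_eq_sum_map_eval_monomial (n : ℕ) (e : Fin n ⊕ Fin n →₀ ℕ)
    (M : Multiset ((Fin n → ℝ) × (Fin n → ℝ))) :
    qInv n (fun j => e (.inl j)) (fun j => e (.inr j)) M =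
      ((M.map (LinearEquiv.sumArrowLequivProdArrow (Fin n) (Fin n) ℝ ℝ).symm).map
        fun z => eval z (monomial e 1)).sum := by
  simp only [qInv, Multiset.map_map]
  congr 1
  refine Multiset.map_congr rfl fun ⟨x, y⟩ _ => ?_
  simp [eval_monomial, Finsupp.prod_fintype, Fintype.prod_sum_type, Finset.prod_mul_distrib]

theorem stmt10_general (n : ℕ)
    (A B C D : Multiset ((Fin n → ℝ) × (Fin n → ℝ)))
    (h : ∀ a b : Fin n → ℕ, (a, b) ≠ (0, 0) →
      qInv n a b A - qInv n a b B = qInv n a b C - qInv n a b D) :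
    (A + D).filter (fun xy => xy ≠ 0) = (B + C).filter (fun xy => xy ≠ 0) := by
  set φ := (LinearEquiv.sumArrowLequivProdArrow (Fin n) (Fin n) ℝ ℝ).symm
  have moments : ∀ e ≠ 0, (((A + D).map φ).map fun z => eval z (monomial e 1)).sum =
      (((B + C).map φ).map fun z => eval z (monomial e 1)).sum := by
    intro e he
    rw [← qInv_eq_sum_map_eval_monomial, ← qInv_eq_sum_map_eval_monomial, qInv_add, qInv_add]
    have hab := h (fun j => e (.inl j)) (fun j => e (.inr j)) fun hzero => he <| by
      ext (j | j)
      exacts [congrFun (congrArg Prod.fst hzero) j, congrFun (congrArg Prod.snd hzero) j]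
    linarith
  have key := filter_ne_zero_eq_of_forall_monomial moments
  simp only [Multiset.filter_map, Function.comp_def, map_ne_zero_iff _ φ.injective] at key
  exact Multiset.map_injective φ.injective key

/-- If `q_{a,b}(A) - q_{a,b}(B) = q_{a,b}(C) - q_{a,b}(D)` for all
`(a,b) ≠ (0,0)`, then `A + D` and `B + C` agree after removing all copies of the zero
pair. -/
theorem stmt10 (n : ℕ) (hn : 1 ≤ n)
    (A B C D : Multiset ((Fin n → ℝ) × (Fin n → ℝ)))
    (h : ∀ a b : Fin n → ℕ, (a, b) ≠ (0, 0) →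
      qInv n a b A - qInv n a b B = qInv n a b C - qInv n a b D) :
    (A + D).filter (fun xy => xy ≠ 0) = (B + C).filter (fun xy => xy ≠ 0) :=
  stmt10_general n A B C D h
end

section
/- Let n ≥ 1. The map X ↦ ρ(X) from the free abelian group ℤ[J(n)] to the set of functions ℤ^n × ℤ^n → ℤ is injective. -/
/-!
`ρ` is additive, so it suffices to show `ρ(X) ≠ 0` for `X ≠ 0`. Choose `(x, y)` in the support
of `X` whose box `[x, y]` has maximal total side length `∑ⱼ (yⱼ - xⱼ)`. A term `(x', y')` of the
sum defining `ρ(X)(x, y)` is nonzero only if `[x', y'] ⊇ [x, y]`, and by maximality this forces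
`(x', y') = (x, y)`; hence `ρ(X)(x, y) = X(x, y) ≠ 0`.
-/

open scoped Classical

/-- `J(n) = {(x, y) ∈ ℤ^n × ℤ^n : x ≤ y componentwise}`. -/
def Jn (n : ℕ) := {xy : (Fin n → ℤ) × (Fin n → ℤ) // ∀ j, xy.1 j ≤ xy.2 j}

/-- The generalized rank invariant associated to an element `X` of the free abelian group
`ℤ[J(n)]`: `ρ(X)(u, v) = Σ_{(x,y)} X(x,y) · [x ≤ u ∧ u ≤ v ∧ v ≤ y]`. -/
noncomputable def rho (n : ℕ) (X : Jn n →₀ ℤ) (u v : Fin n → ℤ) : ℤ :=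
  X.sum (fun xy c => c *
    (if (∀ j, xy.1.1 j ≤ u j) ∧ (∀ j, u j ≤ v j) ∧ (∀ j, v j ≤ xy.1.2 j) then 1 else 0))

section Box

variable {ι α : Type*} [Fintype ι] [AddCommGroup α] [PartialOrder α] [IsOrderedAddMonoid α]

theorem eq_of_le_of_le_of_sum_sub_le {x y x' y' : ι → α} (hx : x' ≤ x) (hy : y ≤ y')
    (hsum : ∑ j, (y' j - x' j) ≤ ∑ j, (y j - x j)) : x' = x ∧ y' = y := by
  have hle : ∀ j ∈ Finset.univ, y j - x j ≤ y' j - x' j := fun j _ =>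
    sub_le_sub (hy j) (hx j)
  have hside : ∀ j, y j - x j = y' j - x' j := fun j =>
    (Finset.sum_eq_sum_iff_of_le hle).mp (le_antisymm (Finset.sum_le_sum hle) hsum) j
      (Finset.mem_univ j)
  have hzero : ∀ j, (x j - x' j) + (y' j - y j) = 0 := fun j =>
    calc (x j - x' j) + (y' j - y j) = (y' j - x' j) - (y j - x j) := by abel
      _ = 0 := by rw [hside j, sub_self]
  have hboth := fun j => (add_eq_zero_iff_of_nonneg (sub_nonneg.mpr (hx j))
    (sub_nonneg.mpr (hy j))).mp (hzero j)
  exact ⟨funext fun j => (sub_eq_zero.mp (hboth j).1).symm,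
    funext fun j => sub_eq_zero.mp (hboth j).2⟩

end Box

namespace Jn

variable {n : ℕ}

def width (p : Jn n) : ℤ := ∑ j, (p.1.2 j - p.1.1 j)

theorem eq_of_le_of_le_of_width_le {p q : Jn n} (hx : q.1.1 ≤ p.1.1) (hy : p.1.2 ≤ q.1.2)
    (hw : q.width ≤ p.width) : q = p := by
  obtain ⟨hx', hy'⟩ := eq_of_le_of_le_of_sum_sub_le hx hy hw
  exact Subtype.ext (Prod.ext hx' hy')

end Jn

theorem rho_add {n : ℕ} (X Y : Jn n →₀ ℤ) : rho n (X + Y) = rho n X + rho n Y := by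
  funext u v
  exact Finsupp.sum_add_index' (fun _ => zero_mul _) (fun _ _ _ => add_mul _ _ _)

noncomputable def rhoAddMonoidHom (n : ℕ) :
    (Jn n →₀ ℤ) →+ (Fin n → ℤ) → (Fin n → ℤ) → ℤ where
  toFun := rho n
  map_zero' := by funext u v; simp [rho]
  map_add' := rho_add

theorem rho_apply_of_isMaxOn_width {n : ℕ} (X : Jn n →₀ ℤ) {p : Jn n}
    (hp : IsMaxOn Jn.width X.support p) : rho n X p.1.1 p.1.2 = X p := by
  rw [rho, Finsupp.sum, Finset.sum_eq_single p]
  · rw [if_pos ⟨fun _ => le_rfl, p.2, fun _ => le_rfl⟩, mul_one]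
  · rintro q hq hqp
    rw [if_neg, mul_zero]
    rintro ⟨hx, -, hy⟩
    exact hqp (Jn.eq_of_le_of_le_of_width_le hx hy (hp hq))
  · intro hp'
    rw [Finsupp.notMem_support_iff.mp hp', zero_mul]

theorem rho_ne_zero_of_ne_zero {n : ℕ} {X : Jn n →₀ ℤ} (hX : X ≠ 0) : rho n X ≠ 0 := by
  obtain ⟨p, hp, hmax⟩ :=
    X.support.exists_max_image Jn.width (Finsupp.support_nonempty_iff.mpr hX)
  have hcoeff : rho n X p.1.1 p.1.2 = X p := rho_apply_of_isMaxOn_width X hmax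
  intro h
  rw [h] at hcoeff
  exact Finsupp.mem_support_iff.mp hp hcoeff.symm

theorem stmt13_general (n : ℕ) :
    Function.Injective (fun X : Jn n →₀ ℤ => rho n X) := by
  refine (injective_iff_map_eq_zero (rhoAddMonoidHom n)).mpr fun X hX => ?_
  by_contra hne
  exact rho_ne_zero_of_ne_zero hne hX

/-- The map `X ↦ ρ(X)` from `ℤ[J(n)]` to functions `ℤ^n × ℤ^n → ℤ` is
injective. -/
theorem stmt13 (n : ℕ) (hn : 1 ≤ n) :
    Function.Injective (fun X : Jn n →₀ ℤ => rho n X) :=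
  stmt13_general n
end

section
/- Let n ≥ 1. Every generalized rank invariant ρ : ℤ^n × ℤ^n → ℤ equals ρ(X) for some X in the free abelian group ℤ[J(n)]. -/
open scoped Classical

/-!
Send `(u, v)` to `(u, -v) ∈ ℤ^(n ⊕ n)`. Then `x ≤ u ∧ v ≤ y` becomes the single inequality
`(x, -y) ≤ (u, -v)`, so for `u ≤ v` the value `ρ(X)(u, v)` is the sum of `X` over the lower set
of `(u, -v)`; pairs with `x ≰ y` never occur there, since `x ≤ u ≤ v ≤ y`. On functions supported
in a box of `ℤ^m`, summation over lower sets is inverted by the mixed difference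
`Δg(p) = ∑_S (-1)^|S| g(p - 1_S)` (inclusion–exclusion), which is again supported in a box.
Hence `X = Δ g` with `g(u, -v) = r(u, v)` satisfies `ρ(X) = r`.
-/

open Finset

lemma Finset.sum_mul_apply_sub {G R : Type*} [AddGroup G] [NonUnitalNonAssocSemiring R]
    {s t : Finset G} {c : G} {g : G → R} (hg : ∀ w, g w ≠ 0 → w ∈ s)
    (hst : ∀ w ∈ s, w + c ∈ t) (F : G → R) :
    ∑ p ∈ t, F p * g (p - c) = ∑ w ∈ s, F (w + c) * g w := by
  classical
  calc ∑ p ∈ t, F p * g (p - c) = ∑ p ∈ s.map (addRightEmbedding c), F p * g (p - c) := by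
        refine (sum_subset (by simpa [subset_iff] using hst) fun p _ hp => ?_).symm
        have : g (p - c) = 0 := by
          by_contra h
          exact hp (mem_map.2 ⟨p - c, hg _ h, by simp⟩)
        rw [this, mul_zero]
    _ = ∑ w ∈ s, F (w + c) * g w := by simp

section MixedDifference

variable {ι : Type*} [DecidableEq ι]

def indicatorVec (S : Finset ι) : ι → ℤ := fun j => if j ∈ S then 1 else 0

lemma indicatorVec_nonneg (S : Finset ι) : 0 ≤ indicatorVec S := fun j => by
  unfold indicatorVec; split_ifs <;> simp

lemma indicatorVec_le_one (S : Finset ι) : indicatorVec S ≤ 1 := fun j => by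
  unfold indicatorVec; split_ifs <;> simp

variable [Fintype ι]

def mixedDifference (g : (ι → ℤ) → ℤ) (p : ι → ℤ) : ℤ :=
  ∑ S : Finset ι, (-1) ^ #S * g (p - indicatorVec S)

lemma mem_Icc_of_mixedDifference_ne_zero {g : (ι → ℤ) → ℤ} {A B : ι → ℤ}
    (hg : ∀ w, g w ≠ 0 → w ∈ Icc A B) {p : ι → ℤ} (hp : mixedDifference g p ≠ 0) :
    p ∈ Icc A (B + 1) := by
  obtain ⟨S, -, hS⟩ := exists_ne_zero_of_sum_ne_zero hp
  obtain ⟨hA, hB⟩ := mem_Icc.1 (hg _ (right_ne_zero_of_mul hS))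
  exact mem_Icc.2 ⟨hA.trans (sub_le_self _ (indicatorVec_nonneg S)),
    (sub_le_iff_le_add.1 hB).trans (add_le_add_right (indicatorVec_le_one S) B)⟩

lemma sum_ite_add_indicatorVec_le (w q : ι → ℤ) :
    ∑ S : Finset ι, (if w + indicatorVec S ≤ q then (-1 : ℤ) ^ #S else 0)
      = if w = q then 1 else 0 := by
  by_cases hwq : w ≤ q
  · have hfilter : univ.filter (fun S => w + indicatorVec S ≤ q)
        = (univ.filter fun j => w j < q j).powerset := by
      ext S
      simp only [mem_filter, mem_univ, true_and, mem_powerset, subset_iff, Pi.le_def,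
        Pi.add_apply, indicatorVec]
      refine ⟨fun h j hj => by simpa [hj, Int.add_one_le_iff] using h j, fun h j => ?_⟩
      split_ifs with hj
      · exact h hj
      · simpa using hwq j
    rw [← sum_filter, hfilter, sum_powerset_neg_one_pow_card]
    congr 1
    simp only [filter_eq_empty_iff, mem_univ, true_implies, not_lt, eq_iff_iff]
    exact ⟨fun h => le_antisymm hwq h, fun h j => h ▸ le_rfl⟩
  · rw [if_neg fun h => hwq h.le]
    exact sum_eq_zero fun S _ => if_neg fun h =>
      hwq ((le_add_of_nonneg_right (indicatorVec_nonneg S)).trans h)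

theorem sum_Icc_ite_le_mixedDifference {g : (ι → ℤ) → ℤ} {A B : ι → ℤ}
    (hg : ∀ w, g w ≠ 0 → w ∈ Icc A B) (q : ι → ℤ) :
    ∑ p ∈ Icc A (B + 1), (if p ≤ q then mixedDifference g p else 0) = g q := by
  have htranslate (S : Finset ι) :
      ∑ p ∈ Icc A (B + 1), (if p ≤ q then (1 : ℤ) else 0) * g (p - indicatorVec S)
        = ∑ w ∈ Icc A B, (if w + indicatorVec S ≤ q then 1 else 0) * g w := by
    refine sum_mul_apply_sub hg (fun w hw => ?_) _
    obtain ⟨hA, hB⟩ := mem_Icc.1 hw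
    exact mem_Icc.2 ⟨le_add_of_le_of_nonneg hA (indicatorVec_nonneg S),
      add_le_add hB (indicatorVec_le_one S)⟩
  calc ∑ p ∈ Icc A (B + 1), (if p ≤ q then mixedDifference g p else 0)
      = ∑ S : Finset ι, (-1) ^ #S *
          ∑ p ∈ Icc A (B + 1), (if p ≤ q then 1 else 0) * g (p - indicatorVec S) := by
        simp only [mul_sum]
        rw [sum_comm]
        refine sum_congr rfl fun p _ => ?_
        split_ifs <;> simp [mixedDifference]
    _ = ∑ w ∈ Icc A B, g w *
          ∑ S : Finset ι, (if w + indicatorVec S ≤ q then (-1 : ℤ) ^ #S else 0) := by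
        simp only [htranslate, mul_sum]
        rw [sum_comm]
        refine sum_congr rfl fun w _ => sum_congr rfl fun S _ => ?_
        split_ifs <;> ring
    _ = g q := by
        simp only [sum_ite_add_indicatorVec_le, mul_ite, mul_one, mul_zero,
          sum_ite_eq', ite_eq_left_iff]
        exact fun hq => by_contra fun h => hq (hg q (Ne.symm h))

end MixedDifference

lemma rho_eq_zero_of_not_le {n : ℕ} (X : Jn n →₀ ℤ) {u v : Fin n → ℤ} (huv : ¬u ≤ v) :
    rho n X u v = 0 :=
  sum_eq_zero fun p _ => by simp [show ¬∀ j, u j ≤ v j from huv]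

lemma exists_rho_eq_sum_of_le (n : ℕ) (D : (Fin n ⊕ Fin n → ℤ) → ℤ)
    (T : Finset (Fin n ⊕ Fin n → ℤ)) (hD : ∀ w, D w ≠ 0 → w ∈ T) :
    ∃ X : Jn n →₀ ℤ, ∀ u v, u ≤ v →
      rho n X u v = ∑ w ∈ T, if w ≤ Sum.elim u (-v) then D w else 0 := by
  let e : Jn n → (Fin n ⊕ Fin n → ℤ) := fun p => Sum.elim p.1.1 (-p.1.2)
  have he : Function.Injective e := fun p p' h => Subtype.ext <| Prod.ext
    (congrArg (· ∘ Sum.inl) h) (neg_injective (congrArg (· ∘ Sum.inr) h))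
  refine ⟨Finsupp.onFinset (T.preimage e he.injOn) (fun p => D (e p))
    fun p hp => mem_preimage.2 (hD _ hp), fun u v huv => ?_⟩
  rw [rho, Finsupp.onFinset_sum _ fun _ => zero_mul _, ← sum_preimage e T he.injOn]
  · refine sum_congr rfl fun p _ => ?_
    simp [e, Pi.le_def, show ∀ j, u j ≤ v j from huv]
  · intro w _ hw
    refine if_neg fun hle => hw ⟨⟨(w ∘ Sum.inl, -(w ∘ Sum.inr)), ?_⟩, ?_⟩
    · exact fun j => (hle (.inl j)).trans ((huv j).trans (le_neg.1 (hle (.inr j))))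
    · simp [e]

theorem stmt14_general (n : ℕ) (r : (Fin n → ℤ) → (Fin n → ℤ) → ℤ)
    (h1 : ∀ u v, ¬(∀ j, u j ≤ v j) → r u v = 0)
    (h2 : ∃ u₀ v₀ : Fin n → ℤ, ∀ u v,
      ¬((∀ j, u₀ j ≤ u j) ∧ (∀ j, v j ≤ v₀ j)) → r u v = 0) :
    ∃ X : Jn n →₀ ℤ, rho n X = r := by
  obtain ⟨u₀, v₀, h2⟩ := h2
  let g : (Fin n ⊕ Fin n → ℤ) → ℤ := fun w => r (w ∘ Sum.inl) (-(w ∘ Sum.inr))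
  have hg : ∀ w, g w ≠ 0 → w ∈ Icc (Sum.elim u₀ (-v₀)) (Sum.elim v₀ (-u₀)) := by
    intro w hw
    have huv : w ∘ Sum.inl ≤ -(w ∘ Sum.inr) := not_not.1 (mt (h1 _ _) hw)
    obtain ⟨hu, hv⟩ : u₀ ≤ w ∘ Sum.inl ∧ -(w ∘ Sum.inr) ≤ v₀ := not_not.1 (mt (h2 _ _) hw)
    rw [← Sum.elim_comp_inl_inr w, mem_Icc, Sum.elim_le_elim_iff, Sum.elim_le_elim_iff]
    exact ⟨⟨hu, neg_le.1 hv⟩, ⟨huv.trans hv, le_neg.1 (hu.trans huv)⟩⟩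
  obtain ⟨X, hX⟩ :=
    exists_rho_eq_sum_of_le n _ _ fun w => mem_Icc_of_mixedDifference_ne_zero hg (p := w)
  refine ⟨X, funext₂ fun u v => ?_⟩
  by_cases huv : u ≤ v
  · rw [hX u v huv, sum_Icc_ite_le_mixedDifference hg]
    simp [g]
  · rw [rho_eq_zero_of_not_le X huv, h1 u v huv]

/-- Every generalized rank invariant `r : ℤ^n × ℤ^n → ℤ` (i.e. `r u v = 0`
unless `u ≤ v`, and `r u v = 0` outside some window `u₀ ≤ u`, `v ≤ v₀`) equals `ρ(X)` for
some `X ∈ ℤ[J(n)]`. -/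
theorem stmt14 (n : ℕ) (hn : 1 ≤ n) (r : (Fin n → ℤ) → (Fin n → ℤ) → ℤ)
    (h1 : ∀ u v, ¬(∀ j, u j ≤ v j) → r u v = 0)
    (h2 : ∃ u₀ v₀ : Fin n → ℤ, ∀ u v,
      ¬((∀ j, u₀ j ≤ u j) ∧ (∀ j, v j ≤ v₀ j)) → r u v = 0) :
    ∃ X : Jn n →₀ ℤ, rho n X = r :=
  stmt14_general n r h1 h2
end

section
/- Let m, n ≥ 1, let w_1, …, w_m be positive real numbers, and let z_1, …, z_m ∈ ℝ^n have all entries positive (z_i = (z_{i,1}, …, z_{i,n})). Assume the vectors z_1, …, z_m are in decreasing lexicographic order, i.e., z_1 ≥_lex z_2 ≥_lex ⋯ ≥_lex z_m. Then the sequence k ↦ ( Σ_{i=1}^m w_i · ∏_{j=1}^n (z_{i,j}/z_{1,j})^{k^{n+1−j}} )^{1/k} tends to 1 as the natural number k tends to infinity. -/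
open Filter

/-- `u ≤_lex v` on `ℝ^n`: `u = v`, or `u_j < v_j` at the first index `j` where they
differ. -/
def lexLE {n : ℕ} (u v : Fin n → ℝ) : Prop :=
  u = v ∨ ∃ j, (∀ j', j' < j → u j' = v j') ∧ u j < v j

open Topology

/-!
Every factor of the `i = 1` term is `1`, so that term equals `w₁`. For `z_i = z_1` the term
is `w_i`, and for `z_i <_lex z_1`, with first difference at `j₀`, the log of the product is a
polynomial in `k` of degree `n - j₀ ≥ 1` with negative leading coefficient
`log (z_{i,j₀} / z_{1,j₀})`, so the term tends to `0`. Hence the sum eventually lies in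
`[w₁, Σ w_i]`, and its `k`-th root tends to `1`.
-/

theorem tendsto_const_rpow_inv_natCast {c : ℝ} (hc : 0 < c) :
    Tendsto (fun k : ℕ => c ^ (k : ℝ)⁻¹) atTop (𝓝 1) := by
  have h := ((Real.continuousAt_const_rpow hc.ne').tendsto).comp
    (tendsto_inv_atTop_zero.comp tendsto_natCast_atTop_atTop)
  rwa [Real.rpow_zero] at h

theorem tendsto_rpow_inv_natCast_of_eventually_mem_Icc {f : ℕ → ℝ} {a b : ℝ} (ha : 0 < a)
    (hf : ∀ᶠ k in atTop, f k ∈ Set.Icc a b) :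
    Tendsto (fun k : ℕ => f k ^ (k : ℝ)⁻¹) atTop (𝓝 1) := by
  refine tendsto_of_tendsto_of_tendsto_of_le_of_le' (tendsto_const_rpow_inv_natCast ha)
    (tendsto_const_rpow_inv_natCast (c := b) (ha.trans_le ?_)) ?_ ?_
  · obtain ⟨k, hk⟩ := hf.exists
    exact hk.1.trans hk.2
  · filter_upwards [hf] with k hk
    exact Real.rpow_le_rpow ha.le hk.1 (by positivity)
  · filter_upwards [hf] with k hk
    exact Real.rpow_le_rpow (ha.le.trans hk.1) hk.2 (by positivity)

section LexLeadingTerm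

variable {n : ℕ} {L : Fin n → ℝ} {j₀ : Fin n}

theorem pow_mul_le_pow_mul_abs_of_ne (hL : ∀ j < j₀, L j = 0) {k : ℝ} (hk : 1 ≤ k)
    {j : Fin n} (hj : j ≠ j₀) :
    k ^ (n - (j : ℕ)) * L j ≤ k ^ (n - (j₀ : ℕ) - 1) * |L j| := by
  rcases hj.lt_or_gt with hlt | hgt
  · rw [hL j hlt, mul_zero]
    positivity
  · have hexp : n - (j : ℕ) ≤ n - (j₀ : ℕ) - 1 := by
      have : (j₀ : ℕ) < j := hgt
      omega
    calc k ^ (n - (j : ℕ)) * L j ≤ k ^ (n - (j : ℕ)) * |L j| := by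
          gcongr
          exact le_abs_self _
      _ ≤ k ^ (n - (j₀ : ℕ) - 1) * |L j| := by gcongr

theorem sum_pow_mul_le (hL : ∀ j < j₀, L j = 0) {k : ℝ} (hk : 1 ≤ k) :
    ∑ j : Fin n, k ^ (n - (j : ℕ)) * L j ≤
      k ^ (n - (j₀ : ℕ) - 1) * (k * L j₀ + ∑ j, |L j|) := by
  have hpow : k ^ (n - (j₀ : ℕ)) = k ^ (n - (j₀ : ℕ) - 1) * k := by
    rw [← pow_succ, Nat.sub_add_cancel (Nat.sub_pos_of_lt j₀.2)]
  rw [← Finset.add_sum_erase _ _ (Finset.mem_univ j₀), hpow, mul_add, mul_assoc, Finset.mul_sum]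
  refine add_le_add le_rfl ?_
  calc ∑ j ∈ Finset.univ.erase j₀, k ^ (n - (j : ℕ)) * L j
      ≤ ∑ j ∈ Finset.univ.erase j₀, k ^ (n - (j₀ : ℕ) - 1) * |L j| :=
        Finset.sum_le_sum fun j hj =>
          pow_mul_le_pow_mul_abs_of_ne hL hk (Finset.ne_of_mem_erase hj)
    _ ≤ ∑ j : Fin n, k ^ (n - (j₀ : ℕ) - 1) * |L j| :=
        Finset.sum_le_sum_of_subset_of_nonneg (Finset.erase_subset _ _) fun _ _ _ => by positivity

theorem tendsto_sum_pow_mul_atBot (hL : ∀ j < j₀, L j = 0) (hj₀ : L j₀ < 0) :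
    Tendsto (fun k : ℕ => ∑ j : Fin n, (k : ℝ) ^ (n - (j : ℕ)) * L j) atTop atBot := by
  have hlin : Tendsto (fun k : ℕ => (k : ℝ) * L j₀ + ∑ j, |L j|) atTop atBot :=
    tendsto_atBot_add_const_right _ _ (tendsto_natCast_atTop_atTop.atTop_mul_const_of_neg hj₀)
  refine tendsto_atBot_mono' _ ?_ hlin
  filter_upwards [eventually_ge_atTop 1, hlin.eventually (eventually_le_atBot 0)] with k hk hneg
  have hk : (1 : ℝ) ≤ k := by exact_mod_cast hk
  calc ∑ j : Fin n, (k : ℝ) ^ (n - (j : ℕ)) * L j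
      ≤ (k : ℝ) ^ (n - (j₀ : ℕ) - 1) * (k * L j₀ + ∑ j, |L j|) := sum_pow_mul_le hL hk
    _ ≤ k * L j₀ + ∑ j, |L j| := mul_le_of_one_le_left hneg (one_le_pow₀ hk)

end LexLeadingTerm

theorem prod_rpow_eq_exp_sum {ι : Type*} (s : Finset ι) {x : ι → ℝ} (hx : ∀ i, 0 < x i)
    (e : ι → ℝ) : ∏ i ∈ s, x i ^ e i = Real.exp (∑ i ∈ s, e i * Real.log (x i)) := by
  rw [Real.exp_sum]
  refine Finset.prod_congr rfl fun i _ => ?_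
  rw [Real.rpow_def_of_pos (hx i), mul_comm]

theorem tendsto_prod_rpow_pow_zero {n : ℕ} {x : Fin n → ℝ} (hx : ∀ j, 0 < x j) {j₀ : Fin n}
    (hx_eq : ∀ j < j₀, x j = 1) (hx_lt : x j₀ < 1) :
    Tendsto (fun k : ℕ => ∏ j, x j ^ ((k : ℝ) ^ (n - (j : ℕ)))) atTop (𝓝 0) := by
  simp_rw [prod_rpow_eq_exp_sum _ hx]
  exact Real.tendsto_exp_atBot.comp <| tendsto_sum_pow_mul_atBot
    (L := fun j => Real.log (x j)) (fun j hj => by simp [hx_eq j hj]) (Real.log_neg (hx j₀) hx_lt)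

theorem eventually_prod_div_rpow_pow_le_one {n : ℕ} {u v : Fin n → ℝ} (hu : ∀ j, 0 < u j)
    (hv : ∀ j, 0 < v j) (huv : lexLE u v) :
    ∀ᶠ k : ℕ in atTop, ∏ j, (u j / v j) ^ ((k : ℝ) ^ (n - (j : ℕ))) ≤ 1 := by
  rcases huv with rfl | ⟨j₀, heq, hlt⟩
  · refine Eventually.of_forall fun k => ?_
    simp [div_self (hu _).ne']
  · refine (tendsto_prod_rpow_pow_zero (fun j => div_pos (hu j) (hv j)) (j₀ := j₀)
      (fun j hj => by rw [heq j hj, div_self (hv j).ne']) ?_).eventually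
      (eventually_le_nhds zero_lt_one)
    exact (div_lt_one (hv j₀)).2 hlt

theorem stmt17_general (m n : ℕ) (hm : 1 ≤ m)
    (w : Fin m → ℝ) (hw : ∀ i, 0 < w i)
    (z : Fin m → Fin n → ℝ) (hz : ∀ i j, 0 < z i j)
    (hlex : ∀ i i' : Fin m, i ≤ i' → lexLE (z i') (z i)) :
    Tendsto
      (fun k : ℕ =>
        (∑ i : Fin m, w i *
            ∏ j : Fin n, (z i j / z ⟨0, hm⟩ j) ^ ((k : ℝ) ^ (n - (j : ℕ)))) ^ ((k : ℝ)⁻¹))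
      atTop (nhds 1) := by
  set i₀ : Fin m := ⟨0, hm⟩
  set P : Fin m → ℕ → ℝ := fun i k =>
    ∏ j : Fin n, (z i j / z i₀ j) ^ ((k : ℝ) ^ (n - (j : ℕ)))
  have hP_pos i k : 0 < P i k :=
    Finset.prod_pos fun j _ => Real.rpow_pos_of_pos (div_pos (hz i j) (hz i₀ j)) _
  have hP_first k : P i₀ k = 1 := by simp [P, div_self (hz i₀ _).ne']
  have hP_le : ∀ᶠ k in atTop, ∀ i, P i k ≤ 1 := eventually_all.2 fun i =>
    eventually_prod_div_rpow_pow_le_one (hz i) (hz i₀) (hlex i₀ i (Nat.zero_le _))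
  refine tendsto_rpow_inv_natCast_of_eventually_mem_Icc (b := ∑ i, w i) (hw i₀) ?_
  filter_upwards [hP_le] with k hk
  constructor
  · calc w i₀ = w i₀ * P i₀ k := by rw [hP_first, mul_one]
      _ ≤ ∑ i, w i * P i k :=
          Finset.single_le_sum (fun i _ => (mul_pos (hw i) (hP_pos i k)).le) (Finset.mem_univ i₀)
  · calc ∑ i, w i * P i k ≤ ∑ i, w i * 1 :=
          Finset.sum_le_sum fun i _ => mul_le_mul_of_nonneg_left (hk i) (hw i).le
      _ = ∑ i, w i := by simp

/-- For positive weights `w_i` and vectors `z_i ∈ ℝ^n` with positive entries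
arranged in decreasing lexicographic order,
`(Σ_{i=1}^m w_i ∏_{j=1}^n (z_{i,j}/z_{1,j})^{k^{n+1-j}})^{1/k} → 1` as `k → ∞`.
Here `i : Fin m`, `j : Fin n` are 0-based, so `z_1` is `z ⟨0, hm⟩` and the exponent
`k^{n+1-(j+1)} = k^{n-j}`; powers with real exponents are real powers. -/
theorem stmt17 (m n : ℕ) (hm : 1 ≤ m) (hn : 1 ≤ n)
    (w : Fin m → ℝ) (hw : ∀ i, 0 < w i)
    (z : Fin m → Fin n → ℝ) (hz : ∀ i j, 0 < z i j)
    (hlex : ∀ i i' : Fin m, i ≤ i' → lexLE (z i') (z i)) :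
    Tendsto
      (fun k : ℕ =>
        (∑ i : Fin m, w i *
            ∏ j : Fin n, (z i j / z ⟨0, hm⟩ j) ^ ((k : ℝ) ^ (n - (j : ℕ)))) ^ ((k : ℝ)⁻¹))
      atTop (nhds 1) :=
  stmt17_general m n hm w hw z hz hlex
end
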